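/- arXiv:2602.19175 — 9 statements merged into one kernel-verified Lean document; each statement's English description precedes it below -/
import Mathlib

section
/- Let ρ be a measure on a measurable space, let f be integrable on A ∪ B, and let A, B be measurable sets with 0 < ρ(A) < ∞, 0 < ρ(B) < ∞ and ρ(A ∩ B) ≥ G⁻¹·max(ρ(A), ρ(B)) for some G ≥ 1. Writing ⟨f⟩_A = ρ(A)⁻¹∫_A f dρ and a_A = ∫_A |f − ⟨f⟩_A| dρ (and similarly for B), one has |⟨f⟩_A − ⟨f⟩_B| ≤ G·(a_A/ρ(A) + a_B/ρ(B)). -/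
/-! On `A ∩ B` the triangle inequality gives
`|⟨f⟩_A - ⟨f⟩_B| ≤ |f - ⟨f⟩_A| + |f - ⟨f⟩_B|`; integrating over `A ∩ B` bounds
`|⟨f⟩_A - ⟨f⟩_B| · ρ(A ∩ B)` by `a_A + a_B`, and `ρ(A ∩ B) ≥ G⁻¹ ρ(A), G⁻¹ ρ(B)` turns this
into the claimed bound. -/

open MeasureTheory Set

theorem ENNReal.mul_toReal_le_of_ofReal_mul_le {a : ℝ} {x y : ENNReal} (ha : 0 ≤ a)
    (hy : y ≠ ⊤) (h : ENNReal.ofReal a * x ≤ y) : a * x.toReal ≤ y.toReal := by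
  simpa [ENNReal.toReal_mul, ENNReal.toReal_ofReal ha] using ENNReal.toReal_mono hy h

theorem div_le_mul_div_of_inv_mul_le {a m m' G : ℝ} (ha : 0 ≤ a) (hm : 0 < m) (hG : 0 < G)
    (h : G⁻¹ * m ≤ m') : a / m' ≤ G * (a / m) :=
  calc a / m' ≤ a / (G⁻¹ * m) := div_le_div_of_nonneg_left ha (by positivity) h
    _ = G * (a / m) := by field_simp

theorem MeasureTheory.abs_sub_mul_measureReal_inter_le {Ω : Type*} [MeasurableSpace Ω]
    {ρ : Measure Ω} {f : Ω → ℝ} {A B : Set Ω} {c d : ℝ}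
    (hA : IntegrableOn (fun x => |f x - c|) A ρ) (hB : IntegrableOn (fun x => |f x - d|) B ρ) :
    |c - d| * ρ.real (A ∩ B) ≤ ∫ x in A, |f x - c| ∂ρ + ∫ x in B, |f x - d| ∂ρ := by
  have hAI := hA.mono_set (inter_subset_left (t := B))
  have hBI := hB.mono_set (inter_subset_right (s := A))
  calc |c - d| * ρ.real (A ∩ B) = ∫ _ in A ∩ B, |c - d| ∂ρ := by
        rw [setIntegral_const, smul_eq_mul, mul_comm]
    _ ≤ ∫ x in A ∩ B, (|f x - c| + |f x - d|) ∂ρ :=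
        integral_mono_of_nonneg (ae_of_all _ fun _ => abs_nonneg _) (hAI.add hBI) <|
          ae_of_all _ fun x => (abs_sub_le c (f x) d).trans_eq (by rw [abs_sub_comm c])
    _ = ∫ x in A ∩ B, |f x - c| ∂ρ + ∫ x in A ∩ B, |f x - d| ∂ρ := integral_add hAI hBI
    _ ≤ ∫ x in A, |f x - c| ∂ρ + ∫ x in B, |f x - d| ∂ρ := add_le_add
        (setIntegral_mono_set hA (ae_of_all _ fun _ => abs_nonneg _)
          inter_subset_left.eventuallyLE)
        (setIntegral_mono_set hB (ae_of_all _ fun _ => abs_nonneg _)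
          inter_subset_right.eventuallyLE)

theorem stmt_1_general {Ω : Type*} [MeasurableSpace Ω] (ρ : Measure Ω) (f : Ω → ℝ)
    (A B : Set Ω)
    (hf : IntegrableOn f (A ∪ B) ρ)
    (hA0 : 0 < ρ A) (hA1 : ρ A < ⊤) (hB0 : 0 < ρ B) (hB1 : ρ B < ⊤)
    (G : ℝ) (hG : 1 ≤ G)
    (hAB : ENNReal.ofReal G⁻¹ * max (ρ A) (ρ B) ≤ ρ (A ∩ B)) :
    |((ρ A).toReal⁻¹ * ∫ x in A, f x ∂ρ) - ((ρ B).toReal⁻¹ * ∫ x in B, f x ∂ρ)|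
      ≤ G * ((∫ x in A, |f x - (ρ A).toReal⁻¹ * ∫ y in A, f y ∂ρ| ∂ρ) / (ρ A).toReal
           + (∫ x in B, |f x - (ρ B).toReal⁻¹ * ∫ y in B, f y ∂ρ| ∂ρ) / (ρ B).toReal) := by
  have hG0 : 0 < G := one_pos.trans_le hG
  have hmA : 0 < ρ.real A := ENNReal.toReal_pos hA0.ne' hA1.ne
  have hmB : 0 < ρ.real B := ENNReal.toReal_pos hB0.ne' hB1.ne
  have hAB_fin : ρ (A ∩ B) ≠ ⊤ := ((measure_mono inter_subset_left).trans_lt hA1).ne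
  have hIA := ENNReal.mul_toReal_le_of_ofReal_mul_le (inv_nonneg.2 hG0.le) hAB_fin
    ((mul_le_mul_right (le_max_left _ _) _).trans hAB)
  have hIB := ENNReal.mul_toReal_le_of_ofReal_mul_le (inv_nonneg.2 hG0.le) hAB_fin
    ((mul_le_mul_right (le_max_right _ _) _).trans hAB)
  have hmI : 0 < ρ.real (A ∩ B) := (by positivity : 0 < G⁻¹ * ρ.real A).trans_le hIA
  have hoscA := ((hf.mono_set subset_union_left).sub
    (integrableOn_const hA1.ne (C := (ρ A).toReal⁻¹ * ∫ y in A, f y ∂ρ))).abs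
  have hoscB := ((hf.mono_set subset_union_right).sub
    (integrableOn_const hB1.ne (C := (ρ B).toReal⁻¹ * ∫ y in B, f y ∂ρ))).abs
  have key := abs_sub_mul_measureReal_inter_le hoscA hoscB
  have hosc_nonneg (s : Set Ω) (c : ℝ) : 0 ≤ ∫ x in s, |f x - c| ∂ρ :=
    integral_nonneg fun _ => abs_nonneg _
  calc _ ≤ _ / ρ.real (A ∩ B) := (le_div_iff₀ hmI).2 key
    _ = _ := add_div _ _ _
    _ ≤ _ := add_le_add (div_le_mul_div_of_inv_mul_le (hosc_nonneg _ _) hmA hG0 hIA)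
        (div_le_mul_div_of_inv_mul_le (hosc_nonneg _ _) hmB hG0 hIB)
    _ = _ := (mul_add _ _ _).symm

theorem stmt_1 {Ω : Type*} [MeasurableSpace Ω] (ρ : Measure Ω) (f : Ω → ℝ)
    (A B : Set Ω) (hA : MeasurableSet A) (hB : MeasurableSet B)
    (hf : IntegrableOn f (A ∪ B) ρ)
    (hA0 : 0 < ρ A) (hA1 : ρ A < ⊤) (hB0 : 0 < ρ B) (hB1 : ρ B < ⊤)
    (G : ℝ) (hG : 1 ≤ G)
    (hAB : ENNReal.ofReal G⁻¹ * max (ρ A) (ρ B) ≤ ρ (A ∩ B)) :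
    |((ρ A).toReal⁻¹ * ∫ x in A, f x ∂ρ) - ((ρ B).toReal⁻¹ * ∫ x in B, f x ∂ρ)|
      ≤ G * ((∫ x in A, |f x - (ρ A).toReal⁻¹ * ∫ y in A, f y ∂ρ| ∂ρ) / (ρ A).toReal
           + (∫ x in B, |f x - (ρ B).toReal⁻¹ * ∫ y in B, f y ∂ρ| ∂ρ) / (ρ B).toReal) :=
  stmt_1_general ρ f A B hf hA0 hA1 hB0 hB1 G hG hAB
end

section
/- Let ρ be a measure on a measurable space, f an integrable function, G ≥ 1, and B₀, B₁, …, B_N measurable sets with 0 < ρ(B_j) < ∞ for every j and ρ(B_j ∩ B_{j+1}) ≥ G⁻¹·max(ρ(B_j), ρ(B_{j+1})) for every j ∈ {0,…,N−1}. Then, writing ⟨f⟩_{B_j} = ρ(B_j)⁻¹∫_{B_j} f dρ and a_{B_j} = ∫_{B_j} |f − ⟨f⟩_{B_j}| dρ, one has |⟨f⟩_{B_N} − ⟨f⟩_{B₀}| ≤ 2G·Σ_{j=0}^{N} a_{B_j}/ρ(B_j). -/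
/-!
Consecutive averages are compared through the overlap `I = B_j ∩ B_{j+1}`: for `I ⊆ A` one has
`|⟨f⟩_I - ⟨f⟩_A| ≤ a_A / ρ(I)`, and the chain condition gives `ρ(I)⁻¹ ≤ G ρ(B)⁻¹` for both
`B = B_j` and `B = B_{j+1}`. Telescoping along the chain then counts each `a_{B_j} / ρ(B_j)` at
most twice.
-/

open MeasureTheory
open scoped ENNReal

noncomputable def meanOscillation {Ω : Type*} [MeasurableSpace Ω] (ρ : Measure Ω)
    (f : Ω → ℝ) (A : Set Ω) : ℝ :=
  ∫ x in A, |f x - ⨍ y in A, f y ∂ρ| ∂ρ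

theorem ENNReal.toReal_inv_le_mul_toReal_inv {G : ℝ} {x y : ℝ≥0∞} (hG : 0 < G)
    (hx₀ : x ≠ 0) (hx : x ≠ ⊤) (hy : y ≠ ⊤) (hxy : ENNReal.ofReal G⁻¹ * x ≤ y) :
    y.toReal⁻¹ ≤ G * x.toReal⁻¹ := by
  have hxy' : G⁻¹ * x.toReal ≤ y.toReal := by
    simpa [ENNReal.toReal_mul, hG.le] using ENNReal.toReal_mono hy hxy
  have hpos : 0 < G⁻¹ * x.toReal := by
    have := ENNReal.toReal_pos hx₀ hx
    positivity
  calc y.toReal⁻¹ ≤ (G⁻¹ * x.toReal)⁻¹ := inv_anti₀ hpos hxy'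
    _ = G * x.toReal⁻¹ := by rw [mul_inv, inv_inv]

theorem Fin.dist_last_zero_le_sum_dist {α : Type*} [PseudoMetricSpace α] (N : ℕ)
    (u : Fin (N + 1) → α) :
    dist (u (Fin.last N)) (u 0) ≤ ∑ k : Fin N, dist (u k.succ) (u k.castSucc) := by
  induction N with
  | zero => simp
  | succ N ih =>
    have hinit := ih (u ∘ Fin.castSucc)
    simp only [Function.comp_apply, Fin.castSucc_zero] at hinit
    rw [Fin.sum_univ_castSucc]
    simp only [Fin.succ_castSucc, Fin.succ_last]
    linarith [dist_triangle (u (Fin.last (N + 1))) (u (Fin.last N).castSucc) (u 0)]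

theorem Fin.sum_castSucc_add_succ_le (N : ℕ) {c : Fin (N + 1) → ℝ} (hc : ∀ j, 0 ≤ c j) :
    ∑ k : Fin N, (c k.castSucc + c k.succ) ≤ 2 * ∑ j, c j := by
  rw [Finset.sum_add_distrib, two_mul]
  gcongr
  · rw [Fin.sum_univ_castSucc (f := c)]
    exact le_add_of_nonneg_right (hc _)
  · rw [Fin.sum_univ_succ (f := c)]
    exact le_add_of_nonneg_left (hc _)

section Averages

variable {Ω : Type*} [MeasurableSpace Ω] {ρ : Measure Ω} {f : Ω → ℝ}

theorem meanOscillation_nonneg (A : Set Ω) : 0 ≤ meanOscillation ρ f A :=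
  integral_nonneg fun _ => abs_nonneg _

theorem abs_setAverage_sub_setAverage_le_of_subset {I A : Set Ω} (hf : IntegrableOn f A ρ)
    (hIA : I ⊆ A) (hI : ρ I ≠ 0) (hA : ρ A ≠ ⊤) :
    |⨍ x in I, f x ∂ρ - ⨍ x in A, f x ∂ρ| ≤ (ρ.real I)⁻¹ * meanOscillation ρ f A := by
  set c := ⨍ x in A, f x ∂ρ
  have hI' : ρ I ≠ ⊤ := ne_top_of_le_ne_top hA (measure_mono hIA)
  have hfc : IntegrableOn (fun x => f x - c) A ρ := hf.sub (integrableOn_const hA)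
  have hIpos : 0 < ρ.real I := ENNReal.toReal_pos hI hI'
  have hshift : ⨍ x in I, f x ∂ρ - c = (ρ.real I)⁻¹ * ∫ x in I, (f x - c) ∂ρ := by
    rw [integral_sub (hf.mono_set hIA) (integrableOn_const hI'), setIntegral_const,
      setAverage_eq, smul_eq_mul, smul_eq_mul, mul_sub, inv_mul_cancel_left₀ hIpos.ne']
  rw [hshift, abs_mul, abs_of_nonneg (by positivity)]
  gcongr
  calc |∫ x in I, (f x - c) ∂ρ| ≤ ∫ x in I, |f x - c| ∂ρ := abs_integral_le_integral_abs
    _ ≤ ∫ x in A, |f x - c| ∂ρ :=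
      setIntegral_mono_set hfc.abs (.of_forall fun _ => abs_nonneg _) hIA.eventuallyLE

theorem abs_setAverage_sub_setAverage_le_of_overlap {G : ℝ} {B B' : Set Ω}
    (hf : Integrable f ρ) (hG : 0 < G) (hB₀ : ρ B ≠ 0) (hB : ρ B ≠ ⊤) (hB' : ρ B' ≠ ⊤)
    (hoverlap : ENNReal.ofReal G⁻¹ * max (ρ B) (ρ B') ≤ ρ (B ∩ B')) :
    |⨍ x in B', f x ∂ρ - ⨍ x in B, f x ∂ρ|
      ≤ G * (meanOscillation ρ f B / ρ.real B + meanOscillation ρ f B' / ρ.real B') := by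
  have hI₀ : ρ (B ∩ B') ≠ 0 := by
    refine (lt_of_lt_of_le (ENNReal.mul_pos ?_ ?_) hoverlap).ne'
    · simpa using hG
    · exact (lt_max_of_lt_left (pos_iff_ne_zero.2 hB₀)).ne'
  have hI : ρ (B ∩ B') ≠ ⊤ := ne_top_of_le_ne_top hB (measure_mono Set.inter_subset_left)
  have hB₀' : ρ B' ≠ 0 := fun h => hI₀ (measure_mono_null Set.inter_subset_right h)
  have hinv : ∀ {A}, ρ A ≠ 0 → ρ A ≠ ⊤ → ρ A ≤ max (ρ B) (ρ B') →
      (ρ.real (B ∩ B'))⁻¹ ≤ G * (ρ.real A)⁻¹ := fun hA₀ hA hA_le =>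
    ENNReal.toReal_inv_le_mul_toReal_inv hG hA₀ hA hI (le_trans (by gcongr) hoverlap)
  have h₁ := abs_setAverage_sub_setAverage_le_of_subset hf.integrableOn
    Set.inter_subset_left hI₀ hB
  have h₂ := abs_setAverage_sub_setAverage_le_of_subset hf.integrableOn
    Set.inter_subset_right hI₀ hB'
  calc |⨍ x in B', f x ∂ρ - ⨍ x in B, f x ∂ρ|
      ≤ |⨍ x in B ∩ B', f x ∂ρ - ⨍ x in B, f x ∂ρ|
          + |⨍ x in B ∩ B', f x ∂ρ - ⨍ x in B', f x ∂ρ| := by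
        rw [abs_sub_comm (⨍ x in B ∩ B', f x ∂ρ) (⨍ x in B', f x ∂ρ), add_comm]
        exact abs_sub_le _ _ _
    _ ≤ (ρ.real (B ∩ B'))⁻¹ * meanOscillation ρ f B
          + (ρ.real (B ∩ B'))⁻¹ * meanOscillation ρ f B' := add_le_add h₁ h₂
    _ ≤ G * (ρ.real B)⁻¹ * meanOscillation ρ f B
          + G * (ρ.real B')⁻¹ * meanOscillation ρ f B' := by
        gcongr
        · exact meanOscillation_nonneg _
        · exact hinv hB₀ hB (le_max_left _ _)
        · exact meanOscillation_nonneg _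
        · exact hinv hB₀' hB' (le_max_right _ _)
    _ = _ := by ring

end Averages

theorem stmt_2_general {Ω : Type*} [MeasurableSpace Ω] (ρ : Measure Ω) (f : Ω → ℝ)
    (hf : Integrable f ρ) (G : ℝ) (hG : 1 ≤ G) (N : ℕ)
    (B : Fin (N + 1) → Set Ω)
    (hB0 : ∀ j, 0 < ρ (B j)) (hB1 : ∀ j, ρ (B j) < ⊤)
    (hchain : ∀ k : Fin N,
      ENNReal.ofReal G⁻¹ * max (ρ (B k.castSucc)) (ρ (B k.succ)) ≤ ρ (B k.castSucc ∩ B k.succ)) :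
    |((ρ (B (Fin.last N))).toReal⁻¹ * ∫ x in B (Fin.last N), f x ∂ρ)
        - ((ρ (B 0)).toReal⁻¹ * ∫ x in B 0, f x ∂ρ)|
      ≤ 2 * G * ∑ j : Fin (N + 1),
          (∫ x in B j, |f x - (ρ (B j)).toReal⁻¹ * ∫ y in B j, f y ∂ρ| ∂ρ) / (ρ (B j)).toReal := by
  have hG₀ : 0 < G := zero_lt_one.trans_le hG
  set u : Fin (N + 1) → ℝ := fun j => ⨍ x in B j, f x ∂ρ
  set c : Fin (N + 1) → ℝ := fun j => meanOscillation ρ f (B j) / ρ.real (B j)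
  have hc : ∀ j, 0 ≤ c j := fun j => div_nonneg (meanOscillation_nonneg _) measureReal_nonneg
  have hstep : ∀ k : Fin N, |u k.succ - u k.castSucc| ≤ G * (c k.castSucc + c k.succ) :=
    fun k => abs_setAverage_sub_setAverage_le_of_overlap hf hG₀ (hB0 _).ne' (hB1 _).ne
      (hB1 _).ne (hchain k)
  have hbound : |u (Fin.last N) - u 0| ≤ 2 * G * ∑ j, c j :=
    calc |u (Fin.last N) - u 0| ≤ ∑ k : Fin N, |u k.succ - u k.castSucc| := by
          simpa only [Real.dist_eq] using Fin.dist_last_zero_le_sum_dist N u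
      _ ≤ ∑ k : Fin N, G * (c k.castSucc + c k.succ) :=
          Finset.sum_le_sum fun k _ => hstep k
      _ ≤ G * (2 * ∑ j, c j) := by
          rw [← Finset.mul_sum]
          exact mul_le_mul_of_nonneg_left (Fin.sum_castSucc_add_succ_le N hc) hG₀.le
      _ = 2 * G * ∑ j, c j := by ring
  simpa only [u, c, meanOscillation, setAverage_eq, smul_eq_mul, measureReal_def] using hbound

theorem stmt_2 {Ω : Type*} [MeasurableSpace Ω] (ρ : Measure Ω) (f : Ω → ℝ)
    (hf : Integrable f ρ) (G : ℝ) (hG : 1 ≤ G) (N : ℕ)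
    (B : Fin (N + 1) → Set Ω) (hB : ∀ j, MeasurableSet (B j))
    (hB0 : ∀ j, 0 < ρ (B j)) (hB1 : ∀ j, ρ (B j) < ⊤)
    (hchain : ∀ k : Fin N,
      ENNReal.ofReal G⁻¹ * max (ρ (B k.castSucc)) (ρ (B k.succ)) ≤ ρ (B k.castSucc ∩ B k.succ)) :
    |((ρ (B (Fin.last N))).toReal⁻¹ * ∫ x in B (Fin.last N), f x ∂ρ)
        - ((ρ (B 0)).toReal⁻¹ * ∫ x in B 0, f x ∂ρ)|
      ≤ 2 * G * ∑ j : Fin (N + 1),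
          (∫ x in B j, |f x - (ρ (B j)).toReal⁻¹ * ∫ y in B j, f y ∂ρ| ∂ρ) / (ρ (B j)).toReal :=
  stmt_2_general ρ f hf G hG N B hB0 hB1 hchain
end

section
/- Let (X,d) be a metric space, S ⊆ X open, and ρ a Borel measure on X with ρ(X∖S)=0 which is doubling on S with constant β ≥ 1 (i.e. ρ(B(x,2r)) ≤ β·ρ(B(x,r)) for every x ∈ S and r > 0). Let 𝓕 be a countable family of open balls with centers in S such that Σ_{B∈𝓕} χ_{2B}(x) ≤ E for every x ∈ S, where 2B is the ball with the same center and twice the radius. Then for every z ∈ S, r > 0 and F > 1, one has Σ_{B∈𝓕, B ⊆ B(z,Fr)} ρ(B) ≤ E·β²·F^{log β/log 2}·ρ(B(z,r)). -/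
/-!
Bounded overlap of the doubled balls gives `∑ ρ(B) ≤ ∑ ρ(2B ∩ B(z,Fr)) ≤ E·ρ(B(z,Fr))`, by
integrating `∑ χ_{2B} ≤ E` over `B(z,Fr)`. With `n = ⌈log₂ F⌉`, the ball `B(z,Fr)` lies in
`B(z,2ⁿr)`, so `n` doublings give `ρ(B(z,Fr)) ≤ βⁿ ρ(B(z,r))`, and
`βⁿ ≤ β^(log₂ F + 1) = β·F^(log β / log 2) ≤ β²·F^(log β / log 2)`.
-/

open MeasureTheory Metric
open scoped ENNReal

attribute [local instance] Classical.propDecidable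

lemma Metric.ball_subset_ball_two_mul {X : Type*} [PseudoMetricSpace X] (x : X) (r : ℝ) :
    ball x r ⊆ ball x (2 * r) := by
  rcases le_or_gt r 0 with hr | hr
  · simp [ball_eq_empty.2 hr]
  · exact ball_subset_ball (by linarith)

namespace MeasureTheory

variable {X : Type*} [MeasurableSpace X] {μ : Measure X}

lemma ite_subset_measure_le_measure_inter {s s' : Set X} (t : Set X) (hs : s ⊆ s') :
    (if s ⊆ t then μ s else 0) ≤ μ (s' ∩ t) := by
  split_ifs with h
  · exact measure_mono (Set.subset_inter hs h)
  · exact zero_le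

lemma tsum_measure_inter_le_of_ae_tsum_indicator_le {ι : Type*} [Countable ι] {s : ι → Set X}
    (hs : ∀ i, MeasurableSet (s i)) {E : ℝ≥0∞} (hE : ∀ᵐ x ∂μ, ∑' i, (s i).indicator 1 x ≤ E)
    (t : Set X) : ∑' i, μ (s i ∩ t) ≤ E * μ t :=
  calc ∑' i, μ (s i ∩ t) = ∑' i, ∫⁻ x in t, (s i).indicator 1 x ∂μ := by
        simp_rw [lintegral_indicator_one (hs _), Measure.restrict_apply (hs _)]
    _ = ∫⁻ x in t, ∑' i, (s i).indicator 1 x ∂μ :=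
        (lintegral_tsum fun i => (measurable_one.indicator (hs i)).aemeasurable).symm
    _ ≤ ∫⁻ _ in t, E ∂μ := lintegral_mono_ae (ae_restrict_of_ae hE)
    _ = E * μ t := setLIntegral_const t E

lemma measure_ball_two_pow_mul_le {X : Type*} [PseudoMetricSpace X] [MeasurableSpace X]
    {μ : Measure X} {x : X} {C : ℝ≥0∞}
    (hdoub : ∀ r : ℝ, 0 < r → μ (ball x (2 * r)) ≤ C * μ (ball x r)) {r : ℝ} (hr : 0 < r)
    (n : ℕ) : μ (ball x (2 ^ n * r)) ≤ C ^ n * μ (ball x r) := by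
  induction n with
  | zero => simp
  | succ n ih =>
    calc μ (ball x (2 ^ (n + 1) * r)) = μ (ball x (2 * (2 ^ n * r))) := by ring_nf
      _ ≤ C * μ (ball x (2 ^ n * r)) := hdoub _ (by positivity)
      _ ≤ C * (C ^ n * μ (ball x r)) := by gcongr
      _ = C ^ (n + 1) * μ (ball x r) := by ring

end MeasureTheory

lemma Real.le_two_pow_ceil_logb {F : ℝ} (hF : 0 < F) : F ≤ 2 ^ ⌈Real.logb 2 F⌉₊ := by
  calc F = 2 ^ Real.logb 2 F := (Real.rpow_logb two_pos (by norm_num) hF).symm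
    _ ≤ 2 ^ (⌈Real.logb 2 F⌉₊ : ℝ) := Real.rpow_le_rpow_of_exponent_le one_le_two (Nat.le_ceil _)
    _ = 2 ^ ⌈Real.logb 2 F⌉₊ := Real.rpow_natCast 2 _

lemma Real.rpow_logb_two_eq {β F : ℝ} (hβ : 0 < β) (hF : 0 < F) :
    β ^ Real.logb 2 F = F ^ (Real.log β / Real.log 2) := by
  rw [Real.rpow_def_of_pos hβ, Real.rpow_def_of_pos hF, Real.logb]
  ring_nf

lemma Real.pow_ceil_logb_two_le {β F : ℝ} (hβ : 1 ≤ β) (hF : 1 ≤ F) :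
    β ^ ⌈Real.logb 2 F⌉₊ ≤ β * F ^ (Real.log β / Real.log 2) := by
  have hβ0 : 0 < β := one_pos.trans_le hβ
  have hceil : (⌈Real.logb 2 F⌉₊ : ℝ) ≤ Real.logb 2 F + 1 :=
    (Nat.ceil_lt_add_one (Real.logb_nonneg one_lt_two hF)).le
  calc β ^ ⌈Real.logb 2 F⌉₊ = β ^ (⌈Real.logb 2 F⌉₊ : ℝ) := (Real.rpow_natCast β _).symm
    _ ≤ β ^ (Real.logb 2 F + 1) := Real.rpow_le_rpow_of_exponent_le hβ hceil
    _ = β * F ^ (Real.log β / Real.log 2) := by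
        rw [Real.rpow_add hβ0, Real.rpow_one, Real.rpow_logb_two_eq hβ0 (one_pos.trans_le hF),
          mul_comm]

theorem stmt_3_general {X : Type*} [MetricSpace X] [MeasurableSpace X] [BorelSpace X]
    (S : Set X)
    (ρ : Measure X) (hρS : ρ Sᶜ = 0)
    (β : ℝ) (hβ : 1 ≤ β)
    (hdoub : ∀ x ∈ S, ∀ r : ℝ, 0 < r →
      ρ (ball x (2 * r)) ≤ ENNReal.ofReal β * ρ (ball x r))
    {ι : Type*} [Countable ι] (c : ι → X) (rad : ι → ℝ)
    (E : ℝ)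
    (hE : ∀ x ∈ S,
      ∑' i, (ball (c i) (2 * rad i)).indicator (fun _ => (1 : ℝ≥0∞)) x ≤ ENNReal.ofReal E) :
    ∀ z ∈ S, ∀ r : ℝ, 0 < r → ∀ F : ℝ, 1 < F →
      (∑' i, if ball (c i) (rad i) ⊆ ball z (F * r) then ρ (ball (c i) (rad i)) else 0)
        ≤ ENNReal.ofReal (E * β ^ 2 * F ^ (Real.log β / Real.log 2)) * ρ (ball z r) := by
  intro z hz r hr F hF
  have hE_ae : ∀ᵐ x ∂ρ, ∑' i, (ball (c i) (2 * rad i)).indicator 1 x ≤ ENNReal.ofReal E :=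
    (show ∀ᵐ x ∂ρ, x ∈ S from mem_ae_iff.2 hρS).mono hE
  have hFr : ball z (F * r) ⊆ ball z (2 ^ ⌈Real.logb 2 F⌉₊ * r) :=
    ball_subset_ball (by gcongr; exact Real.le_two_pow_ceil_logb (one_pos.trans hF))
  have hβn : β ^ ⌈Real.logb 2 F⌉₊ ≤ β ^ 2 * F ^ (Real.log β / Real.log 2) :=
    (Real.pow_ceil_logb_two_le hβ hF.le).trans (by gcongr; nlinarith)
  calc (∑' i, if ball (c i) (rad i) ⊆ ball z (F * r) then ρ (ball (c i) (rad i)) else 0)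
      ≤ ∑' i, ρ (ball (c i) (2 * rad i) ∩ ball z (F * r)) :=
        ENNReal.tsum_le_tsum fun i =>
          ite_subset_measure_le_measure_inter _ (ball_subset_ball_two_mul _ _)
    _ ≤ ENNReal.ofReal E * ρ (ball z (F * r)) :=
        tsum_measure_inter_le_of_ae_tsum_indicator_le (fun _ => measurableSet_ball) hE_ae _
    _ ≤ ENNReal.ofReal E * (ENNReal.ofReal β ^ ⌈Real.logb 2 F⌉₊ * ρ (ball z r)) := by
        gcongr
        exact (measure_mono hFr).trans (measure_ball_two_pow_mul_le (hdoub z hz) hr _)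
    _ ≤ ENNReal.ofReal (E * β ^ 2 * F ^ (Real.log β / Real.log 2)) * ρ (ball z r) := by
        rw [← mul_assoc, mul_assoc E, ENNReal.ofReal_mul' (by positivity),
          ← ENNReal.ofReal_pow (by linarith)]
        gcongr

theorem stmt_3 {X : Type*} [MetricSpace X] [MeasurableSpace X] [BorelSpace X]
    (S : Set X) (hS : IsOpen S)
    (ρ : Measure X) (hρS : ρ Sᶜ = 0)
    (β : ℝ) (hβ : 1 ≤ β)
    (hdoub : ∀ x ∈ S, ∀ r : ℝ, 0 < r →
      ρ (ball x (2 * r)) ≤ ENNReal.ofReal β * ρ (ball x r))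
    {ι : Type*} [Countable ι] (c : ι → X) (rad : ι → ℝ)
    (hc : ∀ i, c i ∈ S) (hr : ∀ i, 0 < rad i)
    (E : ℝ)
    (hE : ∀ x ∈ S,
      ∑' i, (ball (c i) (2 * rad i)).indicator (fun _ => (1 : ℝ≥0∞)) x ≤ ENNReal.ofReal E) :
    ∀ z ∈ S, ∀ r : ℝ, 0 < r → ∀ F : ℝ, 1 < F →
      (∑' i, if ball (c i) (rad i) ⊆ ball z (F * r) then ρ (ball (c i) (rad i)) else 0)
        ≤ ENNReal.ofReal (E * β ^ 2 * F ^ (Real.log β / Real.log 2)) * ρ (ball z r) :=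
  stmt_3_general S ρ hρS β hβ hdoub c rad E hE
end

section
/- Let (X,d) be a metric space, B ⊆ X a Borel set, and μ, ρ Borel measures on X such that a₁·μ(A) ≤ ρ(A) ≤ a₂·μ(A) for every Borel set A ⊆ B, where 0 < a₁ ≤ a₂. Assume 0 < μ(B) < ∞ and 0 < ρ(B) < ∞, let f be integrable over B with respect to both μ and ρ, let g : X → [0,∞) be Borel measurable, and suppose the Poincaré-type inequality ∫_B |f − μ(B)⁻¹∫_B f dμ| dμ ≤ c·∫_B g dμ holds for some c ≥ 0. Then ∫_B |f − ρ(B)⁻¹∫_B f dρ| dρ ≤ 2·(a₂/a₁)·c·∫_B g dρ. -/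
/-!
For every constant `m`, the triangle inequality gives
`∫_B |f - f_ρ| dρ ≤ 2 ∫_B |f - m| dρ`. Taking for `m` the `μ`-average of `f`, the comparison
`ρ ≤ a₂ μ` moves the right-hand side to `μ`, where the Poincaré inequality applies, and
`a₁ μ ≤ ρ` moves `∫_B g dμ` back to `ρ`.
-/

open MeasureTheory
open scoped ENNReal

namespace MeasureTheory

variable {α : Type*} [MeasurableSpace α]

theorem Measure.restrict_le_restrict_of_forall_subset {ν₁ ν₂ : Measure α} {B : Set α}
    (hB : MeasurableSet B) (h : ∀ A, MeasurableSet A → A ⊆ B → ν₁ A ≤ ν₂ A) :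
    ν₁.restrict B ≤ ν₂.restrict B :=
  Measure.le_iff.2 fun s hs => by
    simpa only [Measure.restrict_apply hs] using h _ (hs.inter hB) Set.inter_subset_right

theorem integral_abs_sub_average_le_two_mul (ν : Measure α) [IsFiniteMeasure ν] {f : α → ℝ}
    (hf : Integrable f ν) (m : ℝ) :
    ∫ x, |f x - ⨍ y, f y ∂ν| ∂ν ≤ 2 * ∫ x, |f x - m| ∂ν := by
  set a := ⨍ y, f y ∂ν
  have hfm : Integrable (fun x => f x - m) ν := hf.sub (integrable_const m)
  have hmean : ν.real Set.univ * |a - m| ≤ ∫ x, |f x - m| ∂ν := by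
    -- `f - a` has integral zero
    have : ν.real Set.univ * (a - m) = ∫ x, f x - m ∂ν := by
      rw [integral_sub hf (integrable_const m), ← measure_smul_average, integral_const,
        smul_eq_mul, smul_eq_mul, mul_sub]
    calc ν.real Set.univ * |a - m| = |∫ x, f x - m ∂ν| := by
          rw [← this, abs_mul, abs_of_nonneg measureReal_nonneg]
      _ ≤ ∫ x, |f x - m| ∂ν := abs_integral_le_integral_abs
  calc ∫ x, |f x - a| ∂ν ≤ ∫ x, (|f x - m| + |a - m|) ∂ν :=
        integral_mono (hf.sub (integrable_const a)).abs (hfm.abs.add (integrable_const _))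
          fun x => by simpa only [abs_sub_comm m a] using abs_sub_le (f x) m a
    _ = ∫ x, |f x - m| ∂ν + ν.real Set.univ * |a - m| := by
        rw [integral_add hfm.abs (integrable_const _), integral_const, smul_eq_mul]
    _ ≤ 2 * ∫ x, |f x - m| ∂ν := by linarith

theorem ofReal_integral_abs_sub_average_le_of_le_smul {μ ν : Measure α} [IsFiniteMeasure μ]
    [IsFiniteMeasure ν] {a₁ a₂ c : ℝ≥0∞} (ha₁ : a₁ ≠ 0) (ha₁_top : a₁ ≠ ∞)
    (hνμ : ν ≤ a₂ • μ) (hμν : a₁ • μ ≤ ν) {f : α → ℝ} (hfμ : Integrable f μ)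
    (hfν : Integrable f ν) {g : α → ℝ≥0∞} {m : ℝ}
    (hpoin : ENNReal.ofReal (∫ x, |f x - m| ∂μ) ≤ c * ∫⁻ x, g x ∂μ) :
    ENNReal.ofReal (∫ x, |f x - ⨍ y, f y ∂ν| ∂ν) ≤ 2 * (a₂ / a₁) * c * ∫⁻ x, g x ∂ν := by
  have hofReal : ∀ (ν' : Measure α) [IsFiniteMeasure ν'], Integrable f ν' →
      ENNReal.ofReal (∫ x, |f x - m| ∂ν') = ∫⁻ x, ENNReal.ofReal |f x - m| ∂ν' := fun ν' _ hf =>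
    ofReal_integral_eq_lintegral_ofReal (hf.sub (integrable_const m)).abs
      (ae_of_all _ fun _ => abs_nonneg _)
  have hνμ_lintegral : ∫⁻ x, ENNReal.ofReal |f x - m| ∂ν ≤
      a₂ * ∫⁻ x, ENNReal.ofReal |f x - m| ∂μ :=
    (lintegral_mono' hνμ le_rfl).trans_eq (lintegral_smul_measure _ _)
  have hμν_lintegral : ∫⁻ x, g x ∂μ ≤ (∫⁻ x, g x ∂ν) / a₁ := by
    rw [ENNReal.le_div_iff_mul_le (.inl ha₁) (.inl ha₁_top), mul_comm, ← smul_eq_mul,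
      ← lintegral_smul_measure]
    exact lintegral_mono' hμν le_rfl
  calc ENNReal.ofReal (∫ x, |f x - ⨍ y, f y ∂ν| ∂ν)
      ≤ ENNReal.ofReal (2 * ∫ x, |f x - m| ∂ν) :=
        ENNReal.ofReal_le_ofReal (integral_abs_sub_average_le_two_mul ν hfν m)
    _ = 2 * ∫⁻ x, ENNReal.ofReal |f x - m| ∂ν := by
        rw [ENNReal.ofReal_mul zero_le_two, ENNReal.ofReal_ofNat, hofReal ν hfν]
    _ ≤ 2 * (a₂ * (c * ((∫⁻ x, g x ∂ν) / a₁))) := by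
        grw [hνμ_lintegral, ← hofReal μ hfμ, hpoin, hμν_lintegral]
    _ = 2 * (a₂ / a₁) * c * ∫⁻ x, g x ∂ν := by
        simp only [div_eq_mul_inv]
        ring

end MeasureTheory

theorem stmt_4_general {X : Type*} [MeasurableSpace X]
    (B : Set X) (hB : MeasurableSet B)
    (μ ρ : Measure X) (a₁ a₂ : ℝ) (ha₁ : 0 < a₁)
    (hcomp : ∀ A : Set X, MeasurableSet A → A ⊆ B →
      ENNReal.ofReal a₁ * μ A ≤ ρ A ∧ ρ A ≤ ENNReal.ofReal a₂ * μ A)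
    (hμB1 : μ B < ⊤) (hρB1 : ρ B < ⊤)
    (f : X → ℝ) (hfμ : IntegrableOn f B μ) (hfρ : IntegrableOn f B ρ)
    (g : X → ℝ)
    (cst : ℝ) (hcst : 0 ≤ cst)
    (hpoin : ENNReal.ofReal (∫ x in B, |f x - (μ B).toReal⁻¹ * ∫ y in B, f y ∂μ| ∂μ)
      ≤ ENNReal.ofReal cst * ∫⁻ x in B, ENNReal.ofReal (g x) ∂μ) :
    ENNReal.ofReal (∫ x in B, |f x - (ρ B).toReal⁻¹ * ∫ y in B, f y ∂ρ| ∂ρ)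
      ≤ ENNReal.ofReal (2 * (a₂ / a₁) * cst) * ∫⁻ x in B, ENNReal.ofReal (g x) ∂ρ := by
  have : IsFiniteMeasure (μ.restrict B) := isFiniteMeasure_restrict.2 hμB1.ne
  have : IsFiniteMeasure (ρ.restrict B) := isFiniteMeasure_restrict.2 hρB1.ne
  have hρμ : ρ.restrict B ≤ ENNReal.ofReal a₂ • μ.restrict B := by
    rw [← Measure.restrict_smul]
    exact Measure.restrict_le_restrict_of_forall_subset hB fun A hA hAB => (hcomp A hA hAB).2
  have hμρ : ENNReal.ofReal a₁ • μ.restrict B ≤ ρ.restrict B := by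
    rw [← Measure.restrict_smul]
    exact Measure.restrict_le_restrict_of_forall_subset hB fun A hA hAB => (hcomp A hA hAB).1
  have hconst : ENNReal.ofReal (2 * (a₂ / a₁) * cst) =
      2 * (ENNReal.ofReal a₂ / ENNReal.ofReal a₁) * ENNReal.ofReal cst := by
    rw [ENNReal.ofReal_mul' hcst, ENNReal.ofReal_mul zero_le_two, ENNReal.ofReal_ofNat,
      ENNReal.ofReal_div_of_pos ha₁]
  rw [show (ρ B).toReal⁻¹ * ∫ y in B, f y ∂ρ = ⨍ y in B, f y ∂ρ from (setAverage_eq ρ f B).symm,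
    hconst]
  exact ofReal_integral_abs_sub_average_le_of_le_smul (ENNReal.ofReal_pos.2 ha₁).ne'
    ENNReal.ofReal_ne_top hρμ hμρ hfμ hfρ hpoin

theorem stmt_4 {X : Type*} [MetricSpace X] [MeasurableSpace X] [BorelSpace X]
    (B : Set X) (hB : MeasurableSet B)
    (μ ρ : Measure X) (a₁ a₂ : ℝ) (ha₁ : 0 < a₁) (ha₁₂ : a₁ ≤ a₂)
    (hcomp : ∀ A : Set X, MeasurableSet A → A ⊆ B →
      ENNReal.ofReal a₁ * μ A ≤ ρ A ∧ ρ A ≤ ENNReal.ofReal a₂ * μ A)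
    (hμB0 : 0 < μ B) (hμB1 : μ B < ⊤) (hρB0 : 0 < ρ B) (hρB1 : ρ B < ⊤)
    (f : X → ℝ) (hfμ : IntegrableOn f B μ) (hfρ : IntegrableOn f B ρ)
    (g : X → ℝ) (hg : Measurable g) (hg0 : ∀ x, 0 ≤ g x)
    (cst : ℝ) (hcst : 0 ≤ cst)
    (hpoin : ENNReal.ofReal (∫ x in B, |f x - (μ B).toReal⁻¹ * ∫ y in B, f y ∂μ| ∂μ)
      ≤ ENNReal.ofReal cst * ∫⁻ x in B, ENNReal.ofReal (g x) ∂μ) :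
    ENNReal.ofReal (∫ x in B, |f x - (ρ B).toReal⁻¹ * ∫ y in B, f y ∂ρ| ∂ρ)
      ≤ ENNReal.ofReal (2 * (a₂ / a₁) * cst) * ∫⁻ x in B, ENNReal.ofReal (g x) ∂ρ :=
  stmt_4_general B hB μ ρ a₁ a₂ ha₁ hcomp hμB1 hρB1 f hfμ hfρ g cst hcst hpoin
end

section
/- Let (K,d) be a nonempty compact metric space and m a finite Borel measure on K such that m(B(y,r)) > 0 for every y ∈ K and r > 0. Let g : K → ℝ be continuous and, for each t ∈ (0,1], let g_t : K → ℝ be Borel measurable, with sup_{y∈K} |g_t(y) − g(y)| → 0 as t → 0⁺. Then lim_{t→0⁺} ( −t·log ∫_K e^{−g_t(y)/t} dm(y) ) = min_{y∈K} g(y). -/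
open MeasureTheory Filter Topology Set

/-!
The integral `∫ exp (-f / t) dm` is at most `m K · exp (-(min f) / t)`, and at least
`m B · exp (-(max_B f) / t)` for any ball `B`. Taking `-t log`, the factors `m K` and `m B`,
which are positive, contribute `O(t)`, so `-t log ∫ exp (-f / t) dm` is squeezed between
`inf f` and `sup_B f` up to `o(1)`. Applying this to `f = g_t`, uniformly close to `g`, with `B`
a small ball around a minimiser of `g`, both bounds tend to `min g`.
-/

section LaplaceBounds

variable {K : Type*} [MeasurableSpace K] {m : Measure K} [IsFiniteMeasure m]
  {f : K → ℝ} {a b t : ℝ} {s : Set K}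

lemma integrable_exp_neg_div (hf : Measurable f) (ht : 0 ≤ t) (ha : ∀ y, a ≤ f y) :
    Integrable (fun y => Real.exp (-f y / t)) m := by
  refine Integrable.mono' (integrable_const (Real.exp (-a / t)))
    (hf.neg.div_const t).exp.aestronglyMeasurable (Eventually.of_forall fun y => ?_)
  rw [Real.norm_eq_abs, abs_of_pos (Real.exp_pos _)]
  gcongr
  exact ha y

lemma integral_exp_neg_div_le (ht : 0 ≤ t) (ha : ∀ y, a ≤ f y) :
    ∫ y, Real.exp (-f y / t) ∂m ≤ m.real univ * Real.exp (-a / t) := by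
  calc ∫ y, Real.exp (-f y / t) ∂m ≤ ∫ _, Real.exp (-a / t) ∂m :=
        integral_mono_of_nonneg (Eventually.of_forall fun _ => (Real.exp_pos _).le)
          (integrable_const _) (Eventually.of_forall fun y =>
            Real.exp_le_exp.mpr (div_le_div_of_nonneg_right (neg_le_neg (ha y)) ht))
    _ = m.real univ * Real.exp (-a / t) := by rw [integral_const, smul_eq_mul]

lemma measureReal_mul_exp_neg_div_le_integral (ht : 0 ≤ t) (hs : MeasurableSet s)
    (hb : ∀ y ∈ s, f y ≤ b) (hint : Integrable (fun y => Real.exp (-f y / t)) m) :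
    m.real s * Real.exp (-b / t) ≤ ∫ y, Real.exp (-f y / t) ∂m := by
  calc m.real s * Real.exp (-b / t) ≤ ∫ y in s, Real.exp (-f y / t) ∂m := by
        rw [mul_comm]
        exact setIntegral_ge_of_const_le_real hs (measure_ne_top m s)
          (fun y hy => by gcongr; exact hb y hy) hint.integrableOn
    _ ≤ ∫ y, Real.exp (-f y / t) ∂m :=
        setIntegral_le_integral hint (Eventually.of_forall fun _ => (Real.exp_pos _).le)

theorem neg_mul_log_integral_exp_mem_Icc (hf : Measurable f) (ht : 0 < t)
    (ha : ∀ y, a ≤ f y) (hs : MeasurableSet s) (hms : 0 < m s) (hb : ∀ y ∈ s, f y ≤ b) :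
    -t * Real.log (∫ y, Real.exp (-f y / t) ∂m) ∈
      Icc (a - t * Real.log (m.real univ)) (b - t * Real.log (m.real s)) := by
  have hs_pos : 0 < m.real s := ENNReal.toReal_pos hms.ne' (measure_ne_top m s)
  have huniv_pos : 0 < m.real univ := hs_pos.trans_le (measureReal_mono (subset_univ s))
  have hlower := measureReal_mul_exp_neg_div_le_integral ht.le hs hb
    (integrable_exp_neg_div (m := m) hf ht.le ha)
  have hupper := integral_exp_neg_div_le (m := m) ht.le ha
  have hI_pos : 0 < ∫ y, Real.exp (-f y / t) ∂m := lt_of_lt_of_le (by positivity) hlower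
  have hlog_upper := Real.log_le_log hI_pos hupper
  have hlog_lower := Real.log_le_log (by positivity) hlower
  rw [Real.log_mul huniv_pos.ne' (Real.exp_pos _).ne', Real.log_exp] at hlog_upper
  rw [Real.log_mul hs_pos.ne' (Real.exp_pos _).ne', Real.log_exp] at hlog_lower
  have hcancel : ∀ c, t * (c / t) = c := fun c => mul_div_cancel₀ c ht.ne'
  constructor
  · nlinarith [hcancel (-a)]
  · nlinarith [hcancel (-b)]

end LaplaceBounds

lemma eventually_abs_mul_lt (c : ℝ) {ε : ℝ} (hε : 0 < ε) :
    ∀ᶠ t in 𝓝[>] (0 : ℝ), |t * c| < ε := by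
  have hlim : Tendsto (fun t : ℝ => t * c) (𝓝 0) (𝓝 0) := by
    simpa using (continuous_mul_const c).tendsto 0
  simpa using (Metric.tendsto_nhds.mp hlim ε hε).filter_mono nhdsWithin_le_nhds

theorem stmt_5 {K : Type*} [MetricSpace K] [CompactSpace K] [Nonempty K]
    [MeasurableSpace K] [BorelSpace K]
    (m : Measure K) [IsFiniteMeasure m]
    (hm : ∀ (y : K) (r : ℝ), 0 < r → 0 < m (Metric.ball y r))
    (g : K → ℝ) (hg : Continuous g)
    (gt : ℝ → K → ℝ) (hgt : ∀ t ∈ Set.Ioc (0 : ℝ) 1, Measurable (gt t))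
    (hconv : ∀ ε > (0 : ℝ), ∃ δ > (0 : ℝ),
      ∀ t ∈ Set.Ioc (0 : ℝ) 1, t < δ → ∀ y : K, |gt t y - g y| ≤ ε) :
    Filter.Tendsto (fun t : ℝ => -t * Real.log (∫ y, Real.exp (-(gt t y) / t) ∂m))
      (nhdsWithin 0 (Set.Ioi 0)) (nhds (⨅ y, g y)) := by
  obtain ⟨x, hx : g x = ⨅ y, g y⟩ := (isCompact_range hg).sInf_mem (range_nonempty g)
  have hmin : ∀ y, g x ≤ g y := fun y => hx ▸ ciInf_le (isCompact_range hg).bddBelow y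
  rw [← hx, Metric.tendsto_nhds]
  intro ε hε
  obtain ⟨δ, hδ, hclose⟩ := hconv (ε / 4) (by positivity)
  obtain ⟨r, hr, hball⟩ := Metric.continuous_iff.mp hg x (ε / 4) (by positivity)
  filter_upwards [self_mem_nhdsWithin, nhdsWithin_le_nhds (Iio_mem_nhds (lt_min one_pos hδ)),
    eventually_abs_mul_lt (Real.log (m.real univ)) (by positivity : 0 < ε / 4),
    eventually_abs_mul_lt (Real.log (m.real (Metric.ball x r))) (by positivity : 0 < ε / 4)]
    with t (ht0 : 0 < t) (ht_lt : t < min 1 δ) huniv hball_log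
  have ht : t ∈ Ioc 0 1 := ⟨ht0, (ht_lt.trans_le (min_le_left _ _)).le⟩
  have hgt_close := hclose t ht (ht_lt.trans_le (min_le_right _ _))
  have hbounds := neg_mul_log_integral_exp_mem_Icc (hgt t ht) ht0
    (a := g x - ε / 4) (b := g x + ε / 2)
    (fun y => by linarith [(abs_le.mp (hgt_close y)).1, hmin y])
    Metric.isOpen_ball.measurableSet (hm x r hr)
    (fun y hy => by linarith [(abs_le.mp (hgt_close y)).2, (abs_lt.mp (hball y hy)).2])
  rw [Real.dist_eq, abs_lt]
  constructor <;> linarith [hbounds.1, hbounds.2, abs_lt.mp huniv, abs_lt.mp hball_log]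
end

section
/- Let (K,d) be a nonempty compact metric space and m a finite Borel measure on K such that m(B(y,r)) > 0 for every y ∈ K and r > 0. Let g : K → ℝ be continuous with a unique minimizer y₀ ∈ K (i.e. g(y) > g(y₀) for every y ≠ y₀), and for each t ∈ (0,1] let g_t : K → ℝ be Borel measurable, with sup_{y∈K} |g_t(y) − g(y)| → 0 as t → 0⁺. Then for every continuous v : K → ℝ, lim_{t→0⁺} ( ∫_K v(y)·e^{−g_t(y)/t} dm(y) ) / ( ∫_K e^{−g_t(y)/t} dm(y) ) = v(y₀). -/
/-!
Let `a > 0` be the gap by which `g` exceeds `g y₀` outside `B(y₀, r)`. Once `|g_t - g| < a/8`,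
the weights `exp (-g_t / t)` are at least `exp (-(g y₀ + 3a/8) / t)` on a small ball around `y₀`
(which has positive mass) and at most `exp (-(g y₀ + 7a/8) / t)` outside `B(y₀, r)`. So the Gibbs
mass outside `B(y₀, r)` is `O(exp (-a / (2t)))`, and the Gibbs mean of `v` differs from `v y₀` by
at most the oscillation of `v` on `B(y₀, r)` plus a term that vanishes as `t → 0⁺`.
-/

open MeasureTheory Filter Topology Set Real

section WeightedAverage

variable {α : Type*} [MeasurableSpace α] {μ : Measure α} {f w : α → ℝ}

theorem abs_setIntegral_mul_le {s : Set α} {C : ℝ} (hs : MeasurableSet s) (hf0 : ∀ x, 0 ≤ f x)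
    (hf : IntegrableOn f s μ) (hw : ∀ x ∈ s, |w x| ≤ C) :
    |∫ x in s, w x * f x ∂μ| ≤ C * ∫ x in s, f x ∂μ := by
  rw [← Real.norm_eq_abs, ← integral_const_mul]
  refine norm_integral_le_of_norm_le (hf.const_mul C) (ae_restrict_of_forall_mem hs fun x hx => ?_)
  rw [Real.norm_eq_abs, abs_mul, abs_of_nonneg (hf0 x)]
  exact mul_le_mul_of_nonneg_right (hw x hx) (hf0 x)

theorem abs_integral_mul_div_integral_sub_le {v : α → ℝ} {U : Set α} {c η M : ℝ}
    (hU : MeasurableSet U) (hf : Integrable f μ) (hf0 : ∀ x, 0 ≤ f x)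
    (hD : 0 < ∫ x, f x ∂μ) (hv : AEStronglyMeasurable v μ) (hη : 0 ≤ η)
    (hvU : ∀ x ∈ U, |v x - c| ≤ η) (hvM : ∀ x, |v x - c| ≤ M) :
    |(∫ x, v x * f x ∂μ) / (∫ x, f x ∂μ) - c|
      ≤ η + M * ((∫ x in Uᶜ, f x ∂μ) / ∫ x, f x ∂μ) := by
  set D := ∫ x, f x ∂μ
  have hw : Integrable (fun x => (v x - c) * f x) μ :=
    hf.bdd_mul (hv.sub aestronglyMeasurable_const) (ae_of_all _ hvM)
  have hnum : (∫ x, v x * f x ∂μ) - c * D = ∫ x, (v x - c) * f x ∂μ := by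
    have hvf : Integrable (fun x => v x * f x) μ :=
      (hw.add (hf.const_mul c)).congr (ae_of_all _ fun x => by simp only [Pi.add_apply]; ring)
    rw [← integral_const_mul, ← integral_sub hvf (hf.const_mul c)]
    simp only [sub_mul]
  have hdiff : (∫ x, v x * f x ∂μ) / D - c = (∫ x, (v x - c) * f x ∂μ) / D := by
    rw [← hnum]; field_simp
  have hin := abs_setIntegral_mul_le hU hf0 hf.integrableOn hvU
  have hout := abs_setIntegral_mul_le hU.compl hf0 hf.integrableOn fun x _ => hvM x
  have hUD : ∫ x in U, f x ∂μ ≤ D := setIntegral_le_integral hf (ae_of_all _ hf0)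
  calc |(∫ x, v x * f x ∂μ) / D - c|
      = |(∫ x in U, (v x - c) * f x ∂μ) + ∫ x in Uᶜ, (v x - c) * f x ∂μ| / D := by
        rw [hdiff, abs_div, abs_of_pos hD, integral_add_compl hU hw]
    _ ≤ (η * D + M * ∫ x in Uᶜ, f x ∂μ) / D := by
        gcongr
        exact (abs_add_le _ _).trans (add_le_add (hin.trans (by gcongr)) hout)
    _ = η + M * ((∫ x in Uᶜ, f x ∂μ) / D) := by
        rw [add_div, mul_div_cancel_right₀ _ hD.ne', mul_div_assoc]

end WeightedAverage

section Laplace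

variable {α : Type*} [MeasurableSpace α] {μ : Measure α} [IsFiniteMeasure μ] {h : α → ℝ} {t : ℝ}

theorem tendsto_const_mul_exp_neg_div_nhdsGT_zero (κ : ℝ) {a : ℝ} (ha : 0 < a) :
    Tendsto (fun t => κ * exp (-a / t)) (𝓝[>] 0) (𝓝 0) := by
  have : Tendsto (fun t : ℝ => -a / t) (𝓝[>] 0) atBot := by
    simpa only [div_eq_mul_inv] using
      tendsto_inv_nhdsGT_zero.const_mul_atTop_of_neg (neg_lt_zero.mpr ha)
  simpa using (tendsto_exp_atBot.comp this).const_mul κ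

theorem integrable_exp_neg_div_s6 {b : ℝ} (hh : Measurable h) (hb : ∀ x, b ≤ h x) (ht : 0 < t) :
    Integrable (fun x => exp (-h x / t)) μ :=
  Integrable.of_bound (by fun_prop) (exp (-b / t)) <| ae_of_all _ fun x => by
    rw [Real.norm_eq_abs, abs_of_pos (exp_pos _)]
    gcongr
    exact hb x

theorem setIntegral_div_integral_exp_neg_div_le {S B : Set α} {b₁ b₂ : ℝ} (ht : 0 < t)
    (hint : Integrable (fun x => exp (-h x / t)) μ) (hS : MeasurableSet S) (hB : MeasurableSet B)
    (hB0 : μ B ≠ 0) (hhB : ∀ x ∈ B, h x ≤ b₁) (hhS : ∀ x ∈ S, b₂ ≤ h x) :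
    (∫ x in S, exp (-h x / t) ∂μ) / ∫ x, exp (-h x / t) ∂μ
      ≤ μ.real univ / μ.real B * exp (-(b₂ - b₁) / t) := by
  have hupper : ∫ x in S, exp (-h x / t) ∂μ ≤ μ.real univ * exp (-b₂ / t) :=
    calc ∫ x in S, exp (-h x / t) ∂μ ≤ ∫ _ in S, exp (-b₂ / t) ∂μ :=
          setIntegral_mono_on hint.integrableOn (integrableOn_const (measure_ne_top μ _)) hS
            fun x hx => by gcongr; exact hhS x hx
      _ ≤ μ.real univ * exp (-b₂ / t) := by
          rw [setIntegral_const, smul_eq_mul]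
          gcongr
          · exact measure_ne_top μ _
          · exact subset_univ S
  have hlower : μ.real B * exp (-b₁ / t) ≤ ∫ x, exp (-h x / t) ∂μ :=
    calc μ.real B * exp (-b₁ / t) = ∫ _ in B, exp (-b₁ / t) ∂μ := by
          rw [setIntegral_const, smul_eq_mul]
      _ ≤ ∫ x in B, exp (-h x / t) ∂μ :=
          setIntegral_mono_on (integrableOn_const (measure_ne_top μ _)) hint.integrableOn hB
            fun x hx => by gcongr; exact hhB x hx
      _ ≤ ∫ x, exp (-h x / t) ∂μ :=
          setIntegral_le_integral hint (ae_of_all _ fun _ => (exp_pos _).le)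
  have hB0' : 0 < μ.real B := ENNReal.toReal_pos hB0 (measure_ne_top μ B)
  calc (∫ x in S, exp (-h x / t) ∂μ) / ∫ x, exp (-h x / t) ∂μ
      ≤ μ.real univ * exp (-b₂ / t) / (μ.real B * exp (-b₁ / t)) :=
        div_le_div₀ (by positivity) hupper (mul_pos hB0' (exp_pos _)) hlower
    _ = μ.real univ / μ.real B * exp (-(b₂ - b₁) / t) := by
        rw [mul_div_mul_comm, ← exp_sub]
        ring_nf

theorem eventually_integrable_exp_neg_div {g : α → ℝ} {gt : ℝ → α → ℝ}
    (hgt : ∀ᶠ t in 𝓝[>] 0, Measurable (gt t)) (hconv : TendstoUniformly gt g (𝓝[>] 0))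
    (hg : BddBelow (range g)) :
    ∀ᶠ t in 𝓝[>] 0, Integrable (fun x => exp (-gt t x / t)) μ := by
  obtain ⟨b, hb⟩ := hg
  filter_upwards [self_mem_nhdsWithin, hgt, Metric.tendstoUniformly_iff.mp hconv 1 one_pos]
    with t ht hmeas hclose
  refine integrable_exp_neg_div_s6 hmeas (b := b - 1) (fun x => ?_) ht
  have := hb (mem_range_self x)
  have := abs_lt.mp (Real.dist_eq _ _ ▸ hclose x)
  linarith

end Laplace

theorem tendsto_setIntegral_compl_ball_div_integral_exp {K : Type*} [MetricSpace K]
    [CompactSpace K] [MeasurableSpace K] [OpensMeasurableSpace K] {m : Measure K}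
    [IsFiniteMeasure m] {g : K → ℝ} {gt : ℝ → K → ℝ} {y₀ : K} {r : ℝ}
    (hm : ∀ ρ > 0, 0 < m (Metric.ball y₀ ρ)) (hg : Continuous g)
    (hy₀ : ∀ y ≠ y₀, g y₀ < g y) (hconv : TendstoUniformly gt g (𝓝[>] 0))
    (hint : ∀ᶠ t in 𝓝[>] 0, Integrable (fun y => exp (-gt t y / t)) m) (hr : 0 < r) :
    Tendsto (fun t => (∫ y in (Metric.ball y₀ r)ᶜ, exp (-gt t y / t) ∂m) /
      ∫ y, exp (-gt t y / t) ∂m) (𝓝[>] 0) (𝓝 0) := by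
  obtain ⟨c, hc, hgap⟩ : ∃ c, g y₀ < c ∧ ∀ y ∈ (Metric.ball y₀ r)ᶜ, c ≤ g y :=
    Metric.isOpen_ball.isClosed_compl.isCompact.exists_forall_le' hg.continuousOn
      fun y hy => hy₀ y (by rintro rfl; exact hy (Metric.mem_ball_self hr))
  set a := c - g y₀
  obtain ⟨ρ, hρ, hρg⟩ : ∃ ρ > 0, ∀ y ∈ Metric.ball y₀ ρ, g y < g y₀ + a / 4 :=
    Metric.eventually_nhds_iff_ball.mp
      (hg.continuousAt.eventually_lt_const (by simp only [a]; linarith))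
  refine tendsto_of_tendsto_of_tendsto_of_le_of_le' tendsto_const_nhds
    (tendsto_const_mul_exp_neg_div_nhdsGT_zero (m.real univ / m.real (Metric.ball y₀ ρ))
      (half_pos (sub_pos.mpr hc))) ?_ ?_
  · exact Eventually.of_forall fun t => div_nonneg
      (setIntegral_nonneg measurableSet_ball.compl fun _ _ => (exp_pos _).le)
      (integral_nonneg fun _ => (exp_pos _).le)
  · filter_upwards [self_mem_nhdsWithin, hint,
      Metric.tendstoUniformly_iff.mp hconv (a / 8) (by simp only [a]; linarith)]
      with t ht hi hclose
    have hclose' : ∀ y, |gt t y - g y| < a / 8 := fun y => by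
      rw [abs_sub_comm, ← Real.dist_eq]; exact hclose y
    have hexponent : c - a / 8 - (g y₀ + 3 * a / 8) = a / 2 := by simp only [a]; ring
    refine (setIntegral_div_integral_exp_neg_div_le (b₁ := g y₀ + 3 * a / 8) (b₂ := c - a / 8)
      ht hi measurableSet_ball.compl measurableSet_ball (hm ρ hρ).ne' (fun y hy => ?_)
      fun y hy => ?_).trans_eq (by rw [hexponent])
    · linarith [hρg y hy, (abs_lt.mp (hclose' y)).2]
    · linarith [hgap y hy, (abs_lt.mp (hclose' y)).1]

theorem stmt_6_general {K : Type*} [MetricSpace K] [CompactSpace K]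
    [MeasurableSpace K] [BorelSpace K]
    (m : Measure K) [IsFiniteMeasure m]
    (hm : ∀ (y : K) (r : ℝ), 0 < r → 0 < m (Metric.ball y r))
    (g : K → ℝ) (hg : Continuous g)
    (y₀ : K) (hy₀ : ∀ y : K, y ≠ y₀ → g y₀ < g y)
    (gt : ℝ → K → ℝ) (hgt : ∀ t ∈ Set.Ioc (0 : ℝ) 1, Measurable (gt t))
    (hconv : ∀ ε > (0 : ℝ), ∃ δ > (0 : ℝ),
      ∀ t ∈ Set.Ioc (0 : ℝ) 1, t < δ → ∀ y : K, |gt t y - g y| ≤ ε)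
    (v : K → ℝ) (hv : Continuous v) :
    Filter.Tendsto (fun t : ℝ =>
        (∫ y, v y * Real.exp (-(gt t y) / t) ∂m) / (∫ y, Real.exp (-(gt t y) / t) ∂m))
      (nhdsWithin 0 (Set.Ioi 0)) (nhds (v y₀)) := by
  have hunif : TendstoUniformly gt g (𝓝[>] 0) := by
    refine Metric.tendstoUniformly_iff.mpr fun ε hε => ?_
    obtain ⟨δ, hδ, hclose⟩ := hconv (ε / 2) (half_pos hε)
    filter_upwards [Ioo_mem_nhdsGT (lt_min hδ one_pos)] with t ht y
    rw [dist_comm, Real.dist_eq]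
    exact (hclose t ⟨ht.1, ht.2.le.trans (min_le_right _ _)⟩ (ht.2.trans_le (min_le_left _ _))
      y).trans_lt (half_lt_self hε)
  have hint := eventually_integrable_exp_neg_div (μ := m)
    (mem_of_superset (Ioc_mem_nhdsGT one_pos) hgt) hunif (isCompact_range hg).bddBelow
  have : NeZero m := ⟨fun h => (hm y₀ 1 one_pos).ne' (by simp [h])⟩
  obtain ⟨M, hM⟩ := (isCompact_range (hv.sub continuous_const)).isBounded.exists_norm_le
  refine Metric.tendsto_nhds.mpr fun ε hε => ?_
  obtain ⟨r, hr, hvr⟩ := Metric.continuous_iff.mp hv y₀ (ε / 2) (half_pos hε)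
  have hlim := ((tendsto_setIntegral_compl_ball_div_integral_exp (fun ρ => hm y₀ ρ) hg hy₀ hunif
    hint hr).const_mul M).const_add (ε / 2)
  filter_upwards [hint, hlim.eventually_lt_const (by linarith : ε / 2 + M * 0 < ε)] with t hi hlt
  rw [Real.dist_eq]
  exact (abs_integral_mul_div_integral_sub_le measurableSet_ball hi (fun _ => (exp_pos _).le)
    (integral_exp_pos hi) hv.aestronglyMeasurable (half_pos hε).le (fun y hy => (hvr y hy).le)
    fun y => hM _ (mem_range_self y)).trans_lt hlt

theorem stmt_6 {K : Type*} [MetricSpace K] [CompactSpace K] [Nonempty K]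
    [MeasurableSpace K] [BorelSpace K]
    (m : Measure K) [IsFiniteMeasure m]
    (hm : ∀ (y : K) (r : ℝ), 0 < r → 0 < m (Metric.ball y r))
    (g : K → ℝ) (hg : Continuous g)
    (y₀ : K) (hy₀ : ∀ y : K, y ≠ y₀ → g y₀ < g y)
    (gt : ℝ → K → ℝ) (hgt : ∀ t ∈ Set.Ioc (0 : ℝ) 1, Measurable (gt t))
    (hconv : ∀ ε > (0 : ℝ), ∃ δ > (0 : ℝ),
      ∀ t ∈ Set.Ioc (0 : ℝ) 1, t < δ → ∀ y : K, |gt t y - g y| ≤ ε)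
    (v : K → ℝ) (hv : Continuous v) :
    Filter.Tendsto (fun t : ℝ =>
        (∫ y, v y * Real.exp (-(gt t y) / t) ∂m) / (∫ y, Real.exp (-(gt t y) / t) ∂m))
      (nhdsWithin 0 (Set.Ioi 0)) (nhds (v y₀)) :=
  stmt_6_general m hm g hg y₀ hy₀ gt hgt hconv v hv
end

section
/- Let (X,d) be a metric space, Y ⊆ X a nonempty compact set, S ⊆ X nonempty, and D := diam(S ∪ Y) < ∞. Let L ≥ 0 and ψ : Y → ℝ be L-Lipschitz. Define ψ̄(y) := sup_{z∈Y}( ψ(z) − L·d(z,y) ) for y ∈ X, Λ := D + L + 1, and ψ_*(y) := ψ̄(y) − Λ·d(y,Y), where d(y,Y) = inf_{z∈Y} d(y,z). Then for every x ∈ S and every y₁ ∈ X with s := d(y₁,Y) > 0, one has d(x,y₁)²/2 − ψ_*(y₁) ≥ inf_{y∈Y}( d(x,y)²/2 − ψ(y) ) + s²/2 + s. -/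
/-!
Let `y₀ ∈ Y` be a point nearest to `y₁`, so `d(y₁, y₀) = s`. The McShane extension satisfies
`ψ̄(y₁) ≤ ψ(y₀) + L s`, and the reverse triangle inequality gives
`d(x, y₁)² ≥ (d(x, y₀) - s)² ≥ d(x, y₀)² - 2 D s + s²`. The penalty `Λ s = (D + L + 1) s` absorbs
both error terms `D s` and `L s` and leaves `s` over, while `d(x, y₀)²/2 - ψ(y₀)` dominates the infimum.
-/

open Metric

section

variable {X : Type*} [MetricSpace X]

lemma sq_dist_sub_dist_le_sq_dist (x y z : X) : (dist x z - dist y z) ^ 2 ≤ dist x y ^ 2 :=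
  sq_le_sq.mpr ((abs_dist_sub_le x y z).trans abs_dist.ge)

lemma sSup_image_sub_mul_dist_le {Y : Set X} {L : ℝ} {ψ : X → ℝ} (hY : Y.Nonempty) (hL : 0 ≤ L)
    (hψ : ∀ z ∈ Y, ∀ w ∈ Y, ψ z - ψ w ≤ L * dist z w) (y : X) {y₀ : X} (hy₀ : y₀ ∈ Y) :
    sSup ((fun z => ψ z - L * dist z y) '' Y) ≤ ψ y₀ + L * dist y y₀ := by
  refine csSup_le (hY.image _) ?_
  rintro _ ⟨z, hz, rfl⟩
  have htri : L * dist z y₀ ≤ L * (dist z y + dist y y₀) :=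
    mul_le_mul_of_nonneg_left (dist_triangle z y y₀) hL
  linarith [hψ z hz y₀ hy₀]

lemma bddAbove_image_of_sub_le_mul_dist {Y : Set X} {L : ℝ} {ψ : X → ℝ}
    (hYb : Bornology.IsBounded Y) (hL : 0 ≤ L)
    (hψ : ∀ z ∈ Y, ∀ w ∈ Y, ψ z - ψ w ≤ L * dist z w) : BddAbove (ψ '' Y) := by
  rcases Y.eq_empty_or_nonempty with rfl | ⟨y₀, hy₀⟩
  · simp
  refine ⟨ψ y₀ + L * diam Y, ?_⟩
  rintro _ ⟨z, hz, rfl⟩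
  have hdiam : L * dist z y₀ ≤ L * diam Y :=
    mul_le_mul_of_nonneg_left (dist_le_diam_of_mem hYb hz hy₀) hL
  linarith [hψ z hz y₀ hy₀]

end

theorem stmt_7_general {X : Type*} [MetricSpace X] (S Y : Set X)
    (hY : Y.Nonempty) (hYc : IsCompact Y)
    (hdiam : EMetric.diam (S ∪ Y) ≠ ⊤)
    (L : ℝ) (hL : 0 ≤ L) (ψ : X → ℝ)
    (hψ : ∀ z ∈ Y, ∀ w ∈ Y, |ψ z - ψ w| ≤ L * dist z w) :
    ∀ x ∈ S, ∀ y₁ : X, 0 < Metric.infDist y₁ Y →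
      dist x y₁ ^ 2 / 2 -
          (sSup ((fun z => ψ z - L * dist z y₁) '' Y)
            - (Metric.diam (S ∪ Y) + L + 1) * Metric.infDist y₁ Y)
        ≥ sInf ((fun y => dist x y ^ 2 / 2 - ψ y) '' Y)
            + Metric.infDist y₁ Y ^ 2 / 2 + Metric.infDist y₁ Y := by
  intro x hx y₁ hs
  have hψ' : ∀ z ∈ Y, ∀ w ∈ Y, ψ z - ψ w ≤ L * dist z w := fun z hz w hw =>
    (abs_le.mp (hψ z hz w hw)).2
  have hb : Bornology.IsBounded (S ∪ Y) := isBounded_iff_ediam_ne_top.mpr hdiam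
  obtain ⟨y₀, hy₀, hs_eq⟩ := hYc.exists_infDist_eq_dist hY y₁
  have hsup := sSup_image_sub_mul_dist_le hY hL hψ' y₁ hy₀
  obtain ⟨M, hM⟩ := bddAbove_image_of_sub_le_mul_dist (hb.subset Set.subset_union_right) hL hψ'
  have hinf : sInf ((fun y => dist x y ^ 2 / 2 - ψ y) '' Y) ≤ dist x y₀ ^ 2 / 2 - ψ y₀ := by
    refine csInf_le ⟨-M, ?_⟩ ⟨y₀, hy₀, rfl⟩
    rintro _ ⟨y, hy, rfl⟩
    linarith [hM ⟨y, hy, rfl⟩, sq_nonneg (dist x y)]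
  have hsq := sq_dist_sub_dist_le_sq_dist x y₁ y₀
  have hD : dist x y₀ * infDist y₁ Y ≤ diam (S ∪ Y) * infDist y₁ Y :=
    mul_le_mul_of_nonneg_right (dist_le_diam_of_mem hb (.inl hx) (.inr hy₀)) hs.le
  rw [← hs_eq] at hsq hsup
  linarith

theorem stmt_7 {X : Type*} [MetricSpace X] (S Y : Set X)
    (hS : S.Nonempty) (hY : Y.Nonempty) (hYc : IsCompact Y)
    (hdiam : EMetric.diam (S ∪ Y) ≠ ⊤)
    (L : ℝ) (hL : 0 ≤ L) (ψ : X → ℝ)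
    (hψ : ∀ z ∈ Y, ∀ w ∈ Y, |ψ z - ψ w| ≤ L * dist z w) :
    ∀ x ∈ S, ∀ y₁ : X, 0 < Metric.infDist y₁ Y →
      dist x y₁ ^ 2 / 2 -
          (sSup ((fun z => ψ z - L * dist z y₁) '' Y)
            - (Metric.diam (S ∪ Y) + L + 1) * Metric.infDist y₁ Y)
        ≥ sInf ((fun y => dist x y ^ 2 / 2 - ψ y) '' Y)
            + Metric.infDist y₁ Y ^ 2 / 2 + Metric.infDist y₁ Y :=
  stmt_7_general S Y hY hYc hdiam L hL ψ hψ
end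

section
/- Let a < b be real numbers and let u, v : ℝ → ℝ be convex on [a,b] and differentiable on (a,b), with |u'(s)| ≤ M_u and |v'(s)| ≤ M_v for all s ∈ (a,b), where M_u, M_v ≥ 0. Then ∫_a^b (u'(s) − v'(s))² ds ≤ 8·(M_u + M_v)^{4/3} · ( ∫_a^b (u(s) − v(s))² ds )^{1/3}. -/
/-!
Write `w = u - v` and `M = M_u + M_v`, fix `h > 0` and a subinterval `[c, e + h]` of `(a, b)`.
By convexity `h u' ≤ Δₕu` and `h v' ≤ Δₕv` for the forward differences `Δₕ`, so
`|h w' - Δₕw| ≤ Δₕ(u + v) - h (u + v)'`. Since `|w'| ≤ M` this gives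
`h² w'² ≤ (Δₕw)² + 2Mh (Δₕ(u + v) - h (u + v)')` pointwise. Integrated over `[c, e]`, the last
term telescopes into two averages of `u + v` over windows of length `h`, which differ from the
endpoint values by at most `M h / 2`; with `∫ (Δₕw)² ≤ 4 ∫ w²` this yields
`∫ w'² ≤ 4 ∫ w² / h² + 2 M² h` on `[c, e]`, and the last window `[e, e + h]` adds at most `M² h`.
The choice `h = (∫ w² / M²)^(1/3)` (or the trivial bound `M² (d - c)` when the interval is too
short) gives the constant `7`. Finally `[c, d]` exhausts `(a, b)`: at the endpoints `u` and `v`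
need not be differentiable, nor even continuous.
-/

open MeasureTheory

open Set Filter Topology

section Calculus

variable {f f' : ℝ → ℝ} {M : ℝ}

lemma integrableOn_of_abs_le {g : ℝ → ℝ} {s : Set ℝ} (hs : MeasurableSet s)
    (hs' : volume s ≠ ⊤) (hg : AEStronglyMeasurable g (volume.restrict s))
    (hM : ∀ x ∈ s, |g x| ≤ M) : IntegrableOn g s :=
  have : IsFiniteMeasure (volume.restrict s) := isFiniteMeasure_restrict.2 hs'
  Integrable.of_bound hg M <| (ae_restrict_iff' hs).2 (ae_of_all _ hM)

lemma integrableOn_sq_of_abs_le {g : ℝ → ℝ} {s : Set ℝ} (hs : MeasurableSet s)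
    (hs' : volume s ≠ ⊤) (hg : AEStronglyMeasurable g (volume.restrict s))
    (hM : ∀ x ∈ s, |g x| ≤ M) : IntegrableOn (fun x => g x ^ 2) s :=
  integrableOn_of_abs_le hs hs' (hg.pow 2) fun x hx => by
    rw [abs_pow]
    exact pow_le_pow_left₀ (abs_nonneg _) (hM x hx) 2

lemma aestronglyMeasurable_of_hasDerivAt {s : Set ℝ} (hs : MeasurableSet s)
    (hf : ∀ x ∈ s, HasDerivAt f (f' x) x) : AEStronglyMeasurable f' (volume.restrict s) :=
  (aestronglyMeasurable_deriv f _).congr <|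
    (ae_restrict_iff' hs).2 (ae_of_all _ fun x hx => (hf x hx).deriv)

lemma intervalIntegrable_deriv_of_abs_le {a b : ℝ} (hab : a ≤ b)
    (hf : ∀ x ∈ Icc a b, HasDerivAt f (f' x) x) (hM : ∀ x ∈ Icc a b, |f' x| ≤ M) :
    IntervalIntegrable f' volume a b :=
  (intervalIntegrable_iff_integrableOn_Icc_of_le hab).2 <|
    integrableOn_of_abs_le measurableSet_Icc measure_Icc_lt_top.ne
      (aestronglyMeasurable_of_hasDerivAt measurableSet_Icc hf) hM

lemma intervalIntegrable_deriv_sq_of_abs_le {a b : ℝ} (hab : a ≤ b)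
    (hf : ∀ x ∈ Icc a b, HasDerivAt f (f' x) x) (hM : ∀ x ∈ Icc a b, |f' x| ≤ M) :
    IntervalIntegrable (fun x => f' x ^ 2) volume a b :=
  (intervalIntegrable_iff_integrableOn_Icc_of_le hab).2 <|
    integrableOn_sq_of_abs_le measurableSet_Icc measure_Icc_lt_top.ne
      (aestronglyMeasurable_of_hasDerivAt measurableSet_Icc hf) hM

lemma abs_sub_le_of_hasDerivAt {s : Set ℝ} (hs : Convex ℝ s)
    (hf : ∀ x ∈ s, HasDerivAt f (f' x) x) (hM : ∀ x ∈ s, |f' x| ≤ M) {x y : ℝ}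
    (hx : x ∈ s) (hy : y ∈ s) : |f y - f x| ≤ M * |y - x| :=
  hs.norm_image_sub_le_of_norm_hasDerivWithin_le (fun z hz => (hf z hz).hasDerivWithinAt) hM hx hy

lemma abs_integral_sub_le_of_hasDerivAt {x h : ℝ} (hh : 0 ≤ h)
    (hf : ∀ t ∈ Icc x (x + h), HasDerivAt f (f' t) t) (hM : ∀ t ∈ Icc x (x + h), |f' t| ≤ M) :
    |∫ t in x..x + h, (f t - f x)| ≤ M * h ^ 2 / 2 := by
  have hxh : x ≤ x + h := by linarith
  calc |∫ t in x..x + h, (f t - f x)|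
      ≤ ∫ t in x..x + h, M * (t - x) := by
        rw [← Real.norm_eq_abs]
        refine intervalIntegral.norm_integral_le_of_norm_le hxh (ae_of_all _ fun t ht => ?_)
          ((by fun_prop : Continuous fun t => M * (t - x)).intervalIntegrable (μ := volume) _ _)
        have := abs_sub_le_of_hasDerivAt (convex_Icc _ _) hf hM (left_mem_Icc.2 hxh)
          (Ioc_subset_Icc_self ht)
        rwa [abs_of_nonneg (sub_nonneg.2 ht.1.le)] at this
    _ = M * h ^ 2 / 2 := by
        rw [intervalIntegral.integral_comp_sub_right (fun t => M * t),
          intervalIntegral.integral_const_mul, integral_id]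
        ring

lemma ConvexOn.mul_le_sub_of_hasDerivAt {S : Set ℝ} (hf : ConvexOn ℝ S f) {x h df : ℝ}
    (hx : x ∈ S) (hxh : x + h ∈ S) (hh : 0 < h) (hd : HasDerivAt f df x) :
    h * df ≤ f (x + h) - f x := by
  have := hf.le_slope_of_hasDerivAt hx hxh (by linarith) hd
  rwa [slope_def_field, add_sub_cancel_left, le_div_iff₀ hh, mul_comm] at this

lemma ContinuousOn.comp_add_const_Icc {c e h : ℝ} (hf : ContinuousOn f (Icc c (e + h)))
    (hh : 0 ≤ h) : ContinuousOn (fun x => f (x + h)) (Icc c e) :=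
  hf.comp (continuous_add_const h).continuousOn fun x hx =>
    ⟨by linarith [hx.1], by linarith [hx.2]⟩

lemma integral_sub_sub_mul_deriv_eq {c e h : ℝ} (hce : c ≤ e) (hh : 0 ≤ h)
    (hf : ∀ x ∈ Icc c (e + h), HasDerivAt f (f' x) x) (hM : ∀ x ∈ Icc c (e + h), |f' x| ≤ M) :
    ∫ x in c..e, (f (x + h) - f x - h * f' x)
      = (∫ t in e..e + h, (f t - f e)) - ∫ t in c..c + h, (f t - f c) := by
  have hcont : ContinuousOn f (Icc c (e + h)) := fun x hx =>
    (hf x hx).continuousAt.continuousWithinAt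
  have hint : ∀ p ∈ Icc c (e + h), ∀ q ∈ Icc c (e + h), IntervalIntegrable f volume p q :=
    fun p hp q hq => (hcont.mono (uIcc_subset_Icc hp hq)).intervalIntegrable
  have hc : c ∈ Icc c (e + h) := ⟨le_rfl, by linarith⟩
  have he : e ∈ Icc c (e + h) := ⟨hce, by linarith⟩
  have hch : c + h ∈ Icc c (e + h) := ⟨by linarith, by linarith⟩
  have heh : e + h ∈ Icc c (e + h) := ⟨by linarith, le_rfl⟩
  have hsub : Icc c e ⊆ Icc c (e + h) := Icc_subset_Icc_right (by linarith)
  have hshift : IntervalIntegrable (fun x => f (x + h)) volume c e :=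
    (hcont.comp_add_const_Icc hh).intervalIntegrable_of_Icc hce
  have hderiv : IntervalIntegrable f' volume c e :=
    intervalIntegrable_deriv_of_abs_le hce (fun x hx => hf x (hsub hx))
      (fun x hx => hM x (hsub hx))
  have hftc : ∫ x in c..e, f' x = f e - f c :=
    intervalIntegral.integral_eq_sub_of_hasDerivAt
      (fun x hx => hf x (hsub (uIcc_of_le hce ▸ hx))) hderiv
  have hsplit₁ := intervalIntegral.integral_add_adjacent_intervals (hint c hc (c + h) hch)
    (hint (c + h) hch (e + h) heh)
  have hsplit₂ := intervalIntegral.integral_add_adjacent_intervals (hint c hc e he)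
    (hint e he (e + h) heh)
  rw [intervalIntegral.integral_sub (hshift.sub (hint c hc e he)) (hderiv.const_mul h),
    intervalIntegral.integral_sub hshift (hint c hc e he), intervalIntegral.integral_const_mul,
    intervalIntegral.integral_comp_add_right, hftc,
    intervalIntegral.integral_sub (hint e he (e + h) heh) intervalIntegrable_const,
    intervalIntegral.integral_sub (hint c hc (c + h) hch) intervalIntegrable_const,
    intervalIntegral.integral_const, intervalIntegral.integral_const, smul_eq_mul, smul_eq_mul]
  linarith

lemma intervalIntegrable_sub_sub_mul_deriv {c e h : ℝ} (hce : c ≤ e) (hh : 0 ≤ h)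
    (hf : ∀ x ∈ Icc c (e + h), HasDerivAt f (f' x) x) (hM : ∀ x ∈ Icc c (e + h), |f' x| ≤ M) :
    IntervalIntegrable (fun x => f (x + h) - f x - h * f' x) volume c e := by
  have hcont : ContinuousOn f (Icc c (e + h)) := fun x hx =>
    (hf x hx).continuousAt.continuousWithinAt
  have hsub : Icc c e ⊆ Icc c (e + h) := Icc_subset_Icc_right (by linarith)
  exact (((hcont.comp_add_const_Icc hh).sub (hcont.mono hsub)).intervalIntegrable_of_Icc hce).sub
    ((intervalIntegrable_deriv_of_abs_le hce (fun x hx => hf x (hsub hx))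
      (fun x hx => hM x (hsub hx))).const_mul h)

lemma integral_sub_sub_mul_deriv_le {c e h : ℝ} (hce : c ≤ e) (hh : 0 ≤ h)
    (hf : ∀ x ∈ Icc c (e + h), HasDerivAt f (f' x) x) (hM : ∀ x ∈ Icc c (e + h), |f' x| ≤ M) :
    ∫ x in c..e, (f (x + h) - f x - h * f' x) ≤ M * h ^ 2 := by
  have hleft := abs_integral_sub_le_of_hasDerivAt hh
    (fun t ht => hf t (Icc_subset_Icc_right (by linarith) ht))
    (fun t ht => hM t (Icc_subset_Icc_right (by linarith) ht))
  have hright := abs_integral_sub_le_of_hasDerivAt (x := e) hh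
    (fun t ht => hf t (Icc_subset_Icc_left hce ht)) (fun t ht => hM t (Icc_subset_Icc_left hce ht))
  rw [integral_sub_sub_mul_deriv_eq hce hh hf hM]
  linarith [le_abs_self (∫ t in e..e + h, (f t - f e)), neg_abs_le (∫ t in c..c + h, (f t - f c))]

lemma integral_sq_comp_add_sub_le {c e h : ℝ} (hce : c ≤ e) (hh : 0 ≤ h)
    (hf : ContinuousOn f (Icc c (e + h))) :
    ∫ x in c..e, (f (x + h) - f x) ^ 2 ≤ 4 * ∫ x in c..e + h, f x ^ 2 := by
  have hsq : IntervalIntegrable (fun x => f x ^ 2) volume c (e + h) :=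
    ((hf.pow 2).mono (uIcc_of_le (by linarith : c ≤ e + h)).subset).intervalIntegrable
  have hf₀ : ContinuousOn f (Icc c e) := hf.mono (Icc_subset_Icc_right (by linarith))
  have hfh : ContinuousOn (fun x => f (x + h)) (Icc c e) := hf.comp_add_const_Icc hh
  have hfh₂ : IntervalIntegrable (fun x => f (x + h) ^ 2) volume c e :=
    (hfh.pow 2).intervalIntegrable_of_Icc hce
  have hf₂ : IntervalIntegrable (fun x => f x ^ 2) volume c e :=
    (hf₀.pow 2).intervalIntegrable_of_Icc hce
  have hnonneg : 0 ≤ᵐ[volume.restrict (Ioc c (e + h))] fun x => f x ^ 2 :=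
    ae_of_all _ fun x => sq_nonneg (f x)
  calc ∫ x in c..e, (f (x + h) - f x) ^ 2
      ≤ ∫ x in c..e, (2 * f (x + h) ^ 2 + 2 * f x ^ 2) :=
        intervalIntegral.integral_mono_on hce (((hfh.sub hf₀).pow 2).intervalIntegrable_of_Icc hce)
          ((hfh₂.const_mul 2).add (hf₂.const_mul 2))
          fun x _ => by nlinarith [sq_nonneg (f (x + h) + f x)]
    _ = 2 * (∫ x in c + h..e + h, f x ^ 2) + 2 * ∫ x in c..e, f x ^ 2 := by
        rw [intervalIntegral.integral_add (hfh₂.const_mul 2) (hf₂.const_mul 2),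
          intervalIntegral.integral_const_mul, intervalIntegral.integral_const_mul,
          intervalIntegral.integral_comp_add_right (fun x => f x ^ 2)]
    _ ≤ 2 * (∫ x in c..e + h, f x ^ 2) + 2 * ∫ x in c..e + h, f x ^ 2 := by
        gcongr
        · exact intervalIntegral.integral_mono_interval (by linarith) (by linarith) le_rfl
            hnonneg hsq
        · exact intervalIntegral.integral_mono_interval le_rfl hce (by linarith) hnonneg hsq
    _ = 4 * ∫ x in c..e + h, f x ^ 2 := by ring

lemma integral_sq_le_of_abs_le {a b : ℝ} (hab : a ≤ b) (hf : ∀ x ∈ Ioc a b, |f x| ≤ M) :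
    ∫ x in a..b, f x ^ 2 ≤ M ^ 2 * (b - a) := by
  have := intervalIntegral.norm_integral_le_of_norm_le_const (C := M ^ 2)
    (f := fun x => f x ^ 2) fun x hx => by
      rw [Real.norm_eq_abs, abs_pow]
      exact pow_le_pow_left₀ (abs_nonneg _) (hf x (uIoc_of_le hab ▸ hx)) 2
  rw [Real.norm_eq_abs, abs_of_nonneg (sub_nonneg.2 hab)] at this
  exact (le_abs_self _).trans this

lemma integrableOn_sq_Ioo_of_hasDerivAt_of_abs_le {a b : ℝ}
    (hf : ∀ x ∈ Ioo a b, HasDerivAt f (f' x) x) (hM : ∀ x ∈ Ioo a b, |f' x| ≤ M) :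
    IntegrableOn (fun x => f x ^ 2) (Ioo a b) := by
  rcases (Ioo a b).eq_empty_or_nonempty with h | ⟨m, hm⟩
  · simp [h]
  have hcont : ContinuousOn f (Ioo a b) := fun x hx => (hf x hx).continuousAt.continuousWithinAt
  refine integrableOn_sq_of_abs_le measurableSet_Ioo measure_Ioo_lt_top.ne
    (hcont.aestronglyMeasurable measurableSet_Ioo) (M := |f m| + M * (b - a)) fun x hx => ?_
  have hdist : |x - m| ≤ b - a :=
    abs_sub_le_iff.2 ⟨by linarith [hx.2, hm.1], by linarith [hx.1, hm.2]⟩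
  have := (abs_sub_le_of_hasDerivAt (convex_Ioo a b) hf hM hm hx).trans <|
    mul_le_mul_of_nonneg_left hdist ((abs_nonneg _).trans (hM m hm))
  linarith [abs_sub_abs_le_abs_sub (f x) (f m)]

lemma integral_le_of_forall_Ioo_subinterval_le {a b K : ℝ} (hab : a < b)
    (hf : IntervalIntegrable f volume a b)
    (hK : ∀ c ∈ Ioo a b, ∀ d ∈ Ioo c b, ∫ x in c..d, f x ≤ K) : ∫ x in a..b, f x ≤ K := by
  have hf' : ∀ {c d}, c ∈ Icc a b → d ∈ Icc a b → IntegrableOn f (uIcc c d) :=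
    fun hc hd => ((intervalIntegrable_iff' (f := f) (μ := volume)).1 hf).mono_set
      (uIcc_subset_uIcc (uIcc_of_le hab.le ▸ hc) (uIcc_of_le hab.le ▸ hd))
  have hleft : ∀ d ∈ Ioo a b, ∫ x in a..d, f x ≤ K := by
    intro d hd
    have hcont := intervalIntegral.continuousOn_primitive_interval_left
      (hf' (left_mem_Icc.2 hab.le) (Ioo_subset_Icc_self hd))
    rw [uIcc_of_le hd.1.le] at hcont
    refine ((hcont a (left_mem_Icc.2 hd.1.le)).mono Ioo_subset_Icc_self).closure_le
      (by rw [closure_Ioo hd.1.ne]; exact left_mem_Icc.2 hd.1.le) continuousWithinAt_const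
      fun c hc => hK c ⟨hc.1, hc.2.trans hd.2⟩ d ⟨hc.2, hd.2⟩
  have hcont := intervalIntegral.continuousOn_primitive_interval
    (hf' (left_mem_Icc.2 hab.le) (right_mem_Icc.2 hab.le))
  rw [uIcc_of_le hab.le] at hcont
  exact ((hcont b (right_mem_Icc.2 hab.le)).mono Ioo_subset_Icc_self).closure_le
    (by rw [closure_Ioo hab.ne]; exact right_mem_Icc.2 hab.le) continuousWithinAt_const hleft

end Calculus

lemma le_mul_rpow_of_forall_le {X Q M L : ℝ} (hQ : 0 ≤ Q) (hM : 0 ≤ M)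
    (hX : X ≤ M ^ 2 * L) (hXh : ∀ h, 0 < h → h ≤ L → X ≤ 4 * Q / h ^ 2 + 3 * M ^ 2 * h) :
    X ≤ 7 * M ^ ((4 : ℝ) / 3) * Q ^ ((1 : ℝ) / 3) := by
  have hRHS : 0 ≤ 7 * M ^ ((4 : ℝ) / 3) * Q ^ ((1 : ℝ) / 3) := by positivity
  rcases hM.eq_or_lt with rfl | hM
  · exact hX.trans (by simp)
  rcases le_or_gt L 0 with hL | hL
  · exact hX.trans ((mul_nonpos_of_nonneg_of_nonpos (by positivity) hL).trans hRHS)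
  rcases hQ.eq_or_lt with rfl | hQ
  · refine le_trans ?_ hRHS
    have hlim : Tendsto (fun h => 3 * M ^ 2 * h) (𝓝[>] 0) (𝓝 0) := by
      have := (continuous_const_mul (3 * M ^ 2)).tendsto 0
      rw [mul_zero] at this
      exact tendsto_nhdsWithin_of_tendsto_nhds this
    refine ge_of_tendsto hlim ?_
    filter_upwards [Ioo_mem_nhdsGT hL] with h hh
    simpa using hXh h hh.1 hh.2.le
  obtain ⟨p, hp, rfl⟩ : ∃ p > 0, p ^ 3 = Q := ⟨Q ^ ((1 : ℝ) / 3), by positivity, by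
    rw [← Real.rpow_natCast, ← Real.rpow_mul hQ.le]; norm_num⟩
  obtain ⟨q, hq, rfl⟩ : ∃ q > 0, q ^ 3 = M := ⟨M ^ ((1 : ℝ) / 3), by positivity, by
    rw [← Real.rpow_natCast, ← Real.rpow_mul hM.le]; norm_num⟩
  have hp' : (p ^ 3) ^ ((1 : ℝ) / 3) = p := by
    rw [← Real.rpow_natCast, ← Real.rpow_mul hp.le]; norm_num
  have hq' : (q ^ 3) ^ ((4 : ℝ) / 3) = q ^ 4 := by
    rw [← Real.rpow_natCast, ← Real.rpow_mul hq.le, ← Real.rpow_natCast]; norm_num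
  rw [hp', hq']
  -- the step `h = p / q ^ 2` is `(Q / M ^ 2) ^ (1 / 3)`
  rcases le_or_gt (p / q ^ 2) L with hhL | hhL
  · calc X ≤ 4 * p ^ 3 / (p / q ^ 2) ^ 2 + 3 * (q ^ 3) ^ 2 * (p / q ^ 2) :=
          hXh _ (by positivity) hhL
      _ = 7 * q ^ 4 * p := by field_simp; ring
  · calc X ≤ (q ^ 3) ^ 2 * L := hX
      _ ≤ (q ^ 3) ^ 2 * (p / q ^ 2) := by gcongr
      _ = q ^ 4 * p := by field_simp
      _ ≤ 7 * q ^ 4 * p := by nlinarith [mul_pos (pow_pos hq 4) hp]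

lemma sq_le_sq_add_of_abs_le_of_abs_sub_le {p q r N : ℝ} (hp : |p| ≤ N) (hpq : |p - q| ≤ r) :
    p ^ 2 ≤ q ^ 2 + 2 * N * r := by
  have : p * (p - q) ≤ N * r := (le_abs_self _).trans <| (abs_mul p (p - q)).trans_le <|
    mul_le_mul hp hpq (abs_nonneg _) ((abs_nonneg _).trans hp)
  nlinarith [sq_nonneg (p - q)]


section ConvexPair

variable {u v u' v' : ℝ → ℝ} {Mu Mv : ℝ}

-- Convexity makes `u (x + h) - u x - h * du` and `v (x + h) - v x - h * dv` nonnegative, so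
-- their sum bounds the distance from `h * (du - dv)` to the forward difference of `u - v`.
lemma ConvexOn.sq_mul_deriv_sub_le {S : Set ℝ} (hu : ConvexOn ℝ S u) (hv : ConvexOn ℝ S v)
    {x h du dv N : ℝ} (hx : x ∈ S) (hxh : x + h ∈ S) (hh : 0 < h) (hdu : HasDerivAt u du x)
    (hdv : HasDerivAt v dv x) (hN : |du - dv| ≤ N) :
    h ^ 2 * (du - dv) ^ 2 ≤ ((u (x + h) - v (x + h)) - (u x - v x)) ^ 2
      + 2 * (N * h) * ((u (x + h) + v (x + h)) - (u x + v x) - h * (du + dv)) := by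
  have hα := hu.mul_le_sub_of_hasDerivAt hx hxh hh hdu
  have hβ := hv.mul_le_sub_of_hasDerivAt hx hxh hh hdv
  rw [← mul_pow]
  refine (sq_le_sq_add_of_abs_le_of_abs_sub_le (N := N * h)
    (q := (u (x + h) - v (x + h)) - (u x - v x))
    (r := (u (x + h) - u x - h * du) + (v (x + h) - v x - h * dv)) ?_ ?_).trans_eq (by ring)
  · rw [abs_mul, abs_of_pos hh, mul_comm]
    exact mul_le_mul_of_nonneg_right hN hh.le
  · exact abs_le.2 ⟨by linarith, by linarith⟩

lemma sq_mul_integral_sq_deriv_sub_le {c e h : ℝ} (hce : c ≤ e) (hh : 0 < h)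
    (hu : ConvexOn ℝ (Icc c (e + h)) u) (hv : ConvexOn ℝ (Icc c (e + h)) v)
    (hu' : ∀ x ∈ Icc c (e + h), HasDerivAt u (u' x) x)
    (hv' : ∀ x ∈ Icc c (e + h), HasDerivAt v (v' x) x)
    (hMu : ∀ x ∈ Icc c (e + h), |u' x| ≤ Mu) (hMv : ∀ x ∈ Icc c (e + h), |v' x| ≤ Mv) :
    h ^ 2 * ∫ x in c..e, (u' x - v' x) ^ 2
      ≤ 4 * (∫ x in c..e + h, (u x - v x) ^ 2) + 2 * (Mu + Mv) ^ 2 * h ^ 3 := by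
  set M := Mu + Mv
  have hsub : Icc c e ⊆ Icc c (e + h) := Icc_subset_Icc_right (by linarith)
  have hw' : ∀ x ∈ Icc c (e + h), HasDerivAt (fun y => u y - v y) (u' x - v' x) x :=
    fun x hx => (hu' x hx).sub (hv' x hx)
  have hMw : ∀ x ∈ Icc c (e + h), |u' x - v' x| ≤ M :=
    fun x hx => (abs_sub _ _).trans (add_le_add (hMu x hx) (hMv x hx))
  have hφ' : ∀ x ∈ Icc c (e + h), HasDerivAt (fun y => u y + v y) (u' x + v' x) x :=
    fun x hx => (hu' x hx).add (hv' x hx)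
  have hMφ : ∀ x ∈ Icc c (e + h), |u' x + v' x| ≤ M :=
    fun x hx => (abs_add_le _ _).trans (add_le_add (hMu x hx) (hMv x hx))
  have hpoint : ∀ x ∈ Icc c e, h ^ 2 * (u' x - v' x) ^ 2
      ≤ ((u (x + h) - v (x + h)) - (u x - v x)) ^ 2
        + 2 * (M * h) * ((u (x + h) + v (x + h)) - (u x + v x) - h * (u' x + v' x)) :=
    fun x hx => hu.sq_mul_deriv_sub_le hv (hsub hx) ⟨by linarith [hx.1], by linarith [hx.2]⟩ hh
      (hu' x (hsub hx)) (hv' x (hsub hx)) (hMw x (hsub hx))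
  have hw₂ : IntervalIntegrable (fun x => (u' x - v' x) ^ 2) volume c e :=
    intervalIntegrable_deriv_sq_of_abs_le hce (fun x hx => hw' x (hsub hx))
      (fun x hx => hMw x (hsub hx))
  have hcont_w : ContinuousOn (fun y => u y - v y) (Icc c (e + h)) :=
    fun x hx => (hw' x hx).continuousAt.continuousWithinAt
  have hΔw : IntervalIntegrable
      (fun x => ((u (x + h) - v (x + h)) - (u x - v x)) ^ 2) volume c e :=
    (((hcont_w.comp_add_const_Icc hh.le).sub (hcont_w.mono hsub)).pow 2).intervalIntegrable_of_Icc
      hce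
  have hΔφ := intervalIntegrable_sub_sub_mul_deriv hce hh.le hφ' hMφ
  have hM : 0 ≤ M := (abs_nonneg _).trans (hMw c ⟨le_rfl, by linarith⟩)
  calc h ^ 2 * ∫ x in c..e, (u' x - v' x) ^ 2
      = ∫ x in c..e, h ^ 2 * (u' x - v' x) ^ 2 := (intervalIntegral.integral_const_mul _ _).symm
    _ ≤ ∫ x in c..e, (((u (x + h) - v (x + h)) - (u x - v x)) ^ 2
          + 2 * (M * h) * ((u (x + h) + v (x + h)) - (u x + v x) - h * (u' x + v' x))) :=
        intervalIntegral.integral_mono_on hce (hw₂.const_mul _) (hΔw.add (hΔφ.const_mul _)) hpoint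
    _ = (∫ x in c..e, ((u (x + h) - v (x + h)) - (u x - v x)) ^ 2)
          + 2 * (M * h) * ∫ x in c..e,
            ((u (x + h) + v (x + h)) - (u x + v x) - h * (u' x + v' x)) := by
        rw [intervalIntegral.integral_add hΔw (hΔφ.const_mul _),
          intervalIntegral.integral_const_mul]
    _ ≤ 4 * (∫ x in c..e + h, (u x - v x) ^ 2) + 2 * (M * h) * (M * h ^ 2) :=
        add_le_add (integral_sq_comp_add_sub_le hce hh.le hcont_w) <|
          mul_le_mul_of_nonneg_left (integral_sub_sub_mul_deriv_le hce hh.le hφ' hMφ)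
            (by positivity)
    _ = 4 * (∫ x in c..e + h, (u x - v x) ^ 2) + 2 * M ^ 2 * h ^ 3 := by ring

lemma integral_sq_deriv_sub_le {c d h : ℝ} (hh : 0 < h) (hhd : h ≤ d - c)
    (hu : ConvexOn ℝ (Icc c d) u) (hv : ConvexOn ℝ (Icc c d) v)
    (hu' : ∀ x ∈ Icc c d, HasDerivAt u (u' x) x) (hv' : ∀ x ∈ Icc c d, HasDerivAt v (v' x) x)
    (hMu : ∀ x ∈ Icc c d, |u' x| ≤ Mu) (hMv : ∀ x ∈ Icc c d, |v' x| ≤ Mv) :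
    ∫ x in c..d, (u' x - v' x) ^ 2
      ≤ 4 * (∫ x in c..d, (u x - v x) ^ 2) / h ^ 2 + 3 * (Mu + Mv) ^ 2 * h := by
  obtain ⟨e, rfl⟩ : ∃ e, d = e + h := ⟨d - h, by ring⟩
  have hce : c ≤ e := by linarith
  have hMw : ∀ x ∈ Icc c (e + h), |u' x - v' x| ≤ Mu + Mv :=
    fun x hx => (abs_sub _ _).trans (add_le_add (hMu x hx) (hMv x hx))
  have hw₂ := intervalIntegrable_deriv_sq_of_abs_le (by linarith : c ≤ e + h)
    (fun x hx => (hu' x hx).sub (hv' x hx)) hMw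
  have hhead : h ^ 2 * ∫ x in c..e, (u' x - v' x) ^ 2
      ≤ 4 * (∫ x in c..e + h, (u x - v x) ^ 2) + 2 * (Mu + Mv) ^ 2 * h ^ 3 :=
    sq_mul_integral_sq_deriv_sub_le hce hh hu hv hu' hv' hMu hMv
  have htail : ∫ x in e..e + h, (u' x - v' x) ^ 2 ≤ (Mu + Mv) ^ 2 * h := by
    simpa using integral_sq_le_of_abs_le (by linarith : e ≤ e + h)
      fun x hx => hMw x ⟨by linarith [hx.1], hx.2⟩
  rw [← intervalIntegral.integral_add_adjacent_intervals
    (hw₂.mono_set (uIcc_subset_uIcc left_mem_uIcc (mem_uIcc_of_le hce (by linarith))))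
    (hw₂.mono_set (uIcc_subset_uIcc (mem_uIcc_of_le hce (by linarith)) right_mem_uIcc))]
  have : ∫ x in c..e, (u' x - v' x) ^ 2
      ≤ 4 * (∫ x in c..e + h, (u x - v x) ^ 2) / h ^ 2 + 2 * (Mu + Mv) ^ 2 * h := by
    rw [div_add' _ _ _ (by positivity), le_div_iff₀ (by positivity)]
    linarith
  linarith

lemma integral_sq_deriv_sub_le_rpow {c d : ℝ} (hcd : c ≤ d)
    (hu : ConvexOn ℝ (Icc c d) u) (hv : ConvexOn ℝ (Icc c d) v)
    (hu' : ∀ x ∈ Icc c d, HasDerivAt u (u' x) x) (hv' : ∀ x ∈ Icc c d, HasDerivAt v (v' x) x)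
    (hMu : ∀ x ∈ Icc c d, |u' x| ≤ Mu) (hMv : ∀ x ∈ Icc c d, |v' x| ≤ Mv) :
    ∫ x in c..d, (u' x - v' x) ^ 2
      ≤ 7 * (Mu + Mv) ^ ((4 : ℝ) / 3) * (∫ x in c..d, (u x - v x) ^ 2) ^ ((1 : ℝ) / 3) := by
  have hMw : ∀ x ∈ Icc c d, |u' x - v' x| ≤ Mu + Mv :=
    fun x hx => (abs_sub _ _).trans (add_le_add (hMu x hx) (hMv x hx))
  exact le_mul_rpow_of_forall_le (intervalIntegral.integral_nonneg hcd fun _ _ => sq_nonneg _)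
    ((abs_nonneg _).trans (hMw c ⟨le_rfl, hcd⟩))
    (integral_sq_le_of_abs_le hcd fun x hx => hMw x (Ioc_subset_Icc_self hx))
    fun h hh hhd => integral_sq_deriv_sub_le hh hhd hu hv hu' hv' hMu hMv

end ConvexPair

theorem stmt_12 (a b : ℝ) (hab : a < b) (u v u' v' : ℝ → ℝ)
    (Mu Mv : ℝ) (hMu : 0 ≤ Mu) (hMv : 0 ≤ Mv)
    (hu : ConvexOn ℝ (Set.Icc a b) u) (hv : ConvexOn ℝ (Set.Icc a b) v)
    (hu' : ∀ s ∈ Set.Ioo a b, HasDerivAt u (u' s) s)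
    (hv' : ∀ s ∈ Set.Ioo a b, HasDerivAt v (v' s) s)
    (hMu' : ∀ s ∈ Set.Ioo a b, |u' s| ≤ Mu)
    (hMv' : ∀ s ∈ Set.Ioo a b, |v' s| ≤ Mv) :
    ∫ s in Set.Ioo a b, (u' s - v' s) ^ 2
      ≤ 8 * (Mu + Mv) ^ ((4 : ℝ) / 3) * (∫ s in Set.Ioo a b, (u s - v s) ^ 2) ^ ((1 : ℝ) / 3) := by
  have hw' : ∀ s ∈ Ioo a b, HasDerivAt (fun t => u t - v t) (u' s - v' s) s :=
    fun s hs => (hu' s hs).sub (hv' s hs)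
  have hMw : ∀ s ∈ Ioo a b, |u' s - v' s| ≤ Mu + Mv :=
    fun s hs => (abs_sub _ _).trans (add_le_add (hMu' s hs) (hMv' s hs))
  have hlocal : ∀ c ∈ Ioo a b, ∀ d ∈ Ioo c b, ∫ s in c..d, (u' s - v' s) ^ 2
      ≤ 7 * (Mu + Mv) ^ ((4 : ℝ) / 3) * (∫ s in Ioo a b, (u s - v s) ^ 2) ^ ((1 : ℝ) / 3) := by
    intro c hc d hd
    have hsub : Icc c d ⊆ Ioo a b := Icc_subset_Ioo hc.1 hd.2
    have hsub' : Icc c d ⊆ Icc a b := hsub.trans Ioo_subset_Icc_self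
    refine (integral_sq_deriv_sub_le_rpow hd.1.le (hu.subset hsub' (convex_Icc c d))
      (hv.subset hsub' (convex_Icc c d)) (fun x hx => hu' x (hsub hx))
      (fun x hx => hv' x (hsub hx)) (fun x hx => hMu' x (hsub hx))
      (fun x hx => hMv' x (hsub hx))).trans ?_
    gcongr
    · exact intervalIntegral.integral_nonneg hd.1.le fun _ _ => sq_nonneg _
    · rw [intervalIntegral.integral_of_le hd.1.le]
      exact setIntegral_mono_set (integrableOn_sq_Ioo_of_hasDerivAt_of_abs_le hw' hMw)
        (ae_of_all _ fun _ => sq_nonneg _) (Ioc_subset_Icc_self.trans hsub).eventuallyLE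
  have hint : IntervalIntegrable (fun s => (u' s - v' s) ^ 2) volume a b :=
    (intervalIntegrable_iff_integrableOn_Ioo_of_le hab.le).2 <|
      integrableOn_sq_of_abs_le measurableSet_Ioo measure_Ioo_lt_top.ne
        (aestronglyMeasurable_of_hasDerivAt measurableSet_Ioo hw') hMw
  calc ∫ s in Ioo a b, (u' s - v' s) ^ 2 = ∫ s in a..b, (u' s - v' s) ^ 2 := by
        rw [intervalIntegral.integral_of_le hab.le, integral_Ioc_eq_integral_Ioo]
    _ ≤ 7 * (Mu + Mv) ^ ((4 : ℝ) / 3) * (∫ s in Ioo a b, (u s - v s) ^ 2) ^ ((1 : ℝ) / 3) :=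
        integral_le_of_forall_Ioo_subinterval_le hab hint hlocal
    _ ≤ 8 * (Mu + Mv) ^ ((4 : ℝ) / 3) * (∫ s in Ioo a b, (u s - v s) ^ 2) ^ ((1 : ℝ) / 3) := by
        gcongr
        norm_num
end

section
/- Let U ⊆ [0,1] be relatively open in [0,1] and let 1_U : [0,1] → ℝ be its indicator function. Then the number of connected components of U (a value in ℕ ∪ {∞}) satisfies #components(U) ≤ 1 + (1/2)·Var(1_U; [0,1]), where Var(1_U; [0,1]) denotes the (possibly infinite) pointwise total variation of 1_U over [0,1]. -/
/-!
Choose one point in each of `n` components of `U` and list them in increasing order. The closed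
interval between two consecutive chosen points is connected, so it cannot lie inside `U`; the
indicator therefore goes from `1` down to `0` and back to `1` between them, which contributes `2`
to the variation on each of the `n - 1` gaps. Additivity of the variation over adjacent intervals
turns this into `2 * (n - 1) ≤ Var(1_U; [0,1])`.
-/

open scoped ENNReal

open Set Finset

theorem ENat.toENNReal_card_le_of_forall_finset_card_le {β : Type*} {C : ℝ≥0∞}
    (h : ∀ S : Finset β, (#S : ℝ≥0∞) ≤ C) : (ENat.card β : ℝ≥0∞) ≤ C := by
  cases finite_or_infinite β with
  | inl _ =>
    have := Fintype.ofFinite β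
    simpa [ENat.card_eq_coe_fintype_card] using h Finset.univ
  | inr _ =>
    rw [ENat.card_eq_top_of_infinite, ENat.toENNReal_top, top_le_iff]
    refine ENNReal.eq_top_of_forall_nnreal_le fun r => ?_
    obtain ⟨n, hn⟩ := exists_nat_ge r
    obtain ⟨S, rfl⟩ := Infinite.exists_subset_card_eq β n
    exact (ENNReal.coe_le_coe.2 hn).trans (by simpa using h S)

section Order

variable {α : Type*} [LinearOrder α]

theorem eVariationOn.edist_add_edist_le {E : Type*} [PseudoEMetricSpace E] (f : α → E)
    {x y z : α} (hxy : x ≤ y) (hyz : y ≤ z) :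
    edist (f x) (f y) + edist (f y) (f z) ≤ eVariationOn f (Icc x z) := by
  have hsplit := eVariationOn.Icc_add_Icc f hxy hyz (mem_univ y)
  simp only [univ_inter] at hsplit
  rw [← hsplit]
  gcongr
  · exact eVariationOn.edist_le f (left_mem_Icc.2 hxy) (right_mem_Icc.2 hxy)
  · exact eVariationOn.edist_le f (left_mem_Icc.2 hyz) (right_mem_Icc.2 hyz)

theorem two_le_eVariationOn_indicator_Icc {U : Set α} {x z y : α} (hx : x ∈ U) (hy : y ∈ U)
    (hz : z ∈ Icc x y) (hzU : z ∉ U) :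
    2 ≤ eVariationOn (U.indicator fun _ => (1 : ℝ)) (Icc x y) := by
  refine le_trans ?_ (eVariationOn.edist_add_edist_le _ hz.1 hz.2)
  norm_num [indicator_of_mem hx, indicator_of_mem hy, indicator_of_notMem hzU, edist_dist]

theorem two_mul_card_le_eVariationOn_indicator_add_two {U : Set α} (T : Finset α)
    (hTU : ↑T ⊆ U) (hgap : ∀ x ∈ T, ∀ y ∈ T, x < y → ∃ z ∈ Icc x y, z ∉ U)
    {a b : α} (hT : ∀ t ∈ T, t ∈ Icc a b) :
    2 * (#T : ℝ≥0∞) ≤ eVariationOn (U.indicator fun _ => (1 : ℝ)) (Icc a b) + 2 := by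
  induction T using Finset.induction_on_max generalizing b with
  | empty => simp
  | insert c S hlt ih =>
    have hcS : c ∉ S := fun h => (hlt c h).false
    rw [card_insert_of_notMem hcS, Nat.cast_add, Nat.cast_one, mul_add_one]
    obtain rfl | hS := S.eq_empty_or_nonempty
    · simp
    set m := S.max' hS
    have hmS : m ∈ S := S.max'_mem hS
    have hcab := hT c (mem_insert_self c S)
    have hIH := ih (fun t ht => hTU (mem_insert_of_mem ht))
      (fun x hx y hy => hgap x (mem_insert_of_mem hx) y (mem_insert_of_mem hy))
      (b := m) fun t ht => ⟨(hT t (mem_insert_of_mem ht)).1, S.le_max' t ht⟩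
    obtain ⟨z, hz, hzU⟩ := hgap m (mem_insert_of_mem hmS) c (mem_insert_self c S) (hlt m hmS)
    have hgapVar := two_le_eVariationOn_indicator_Icc (hTU (mem_insert_of_mem hmS))
      (hTU (mem_insert_self c S)) hz hzU
    have hsplit := eVariationOn.Icc_add_Icc (U.indicator fun _ => (1 : ℝ))
      (hT m (mem_insert_of_mem hmS)).1 (hlt m hmS).le (mem_univ m)
    simp only [univ_inter] at hsplit
    calc 2 * (#S : ℝ≥0∞) + 2
        ≤ eVariationOn (U.indicator fun _ => (1 : ℝ)) (Icc a m) + 2 + 2 := by gcongr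
      _ ≤ eVariationOn (U.indicator fun _ => (1 : ℝ)) (Icc a c) + 2 := by
        rw [← hsplit, add_right_comm]; gcongr
      _ ≤ eVariationOn (U.indicator fun _ => (1 : ℝ)) (Icc a b) + 2 := by
        gcongr
        exact eVariationOn.mono _ (Icc_subset_Icc_right hcab.2)

end Order

section ConditionallyComplete

variable {α : Type*} [ConditionallyCompleteLinearOrder α] [TopologicalSpace α] [OrderTopology α]
  [DenselyOrdered α] {U : Set α}

theorem ConnectedComponents.mk_eq_mk_of_Icc_subset {x y : U} (hxy : x ≤ y) (h : Icc (x : α) y ⊆ U) :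
    ConnectedComponents.mk x = ConnectedComponents.mk y := by
  rw [ConnectedComponents.coe_eq_coe']
  have hpre : IsPreconnected (Subtype.val ⁻¹' Icc (x : α) y : Set U) := by
    rw [← Topology.IsInducing.subtypeVal.isPreconnected_image, Subtype.image_preimage_coe,
      inter_eq_right.mpr h]
    exact isPreconnected_Icc
  exact hpre.subset_connectedComponent (x := y) ⟨hxy, le_rfl⟩ ⟨le_rfl, hxy⟩

theorem ConnectedComponents.exists_finset_separated_by_gaps (S : Finset (ConnectedComponents U)) :
    ∃ T : Finset α, #T = #S ∧ ↑T ⊆ U ∧ ∀ x ∈ T, ∀ y ∈ T, x < y → ∃ z ∈ Icc x y, z ∉ U := by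
  set σ := Function.surjInv ConnectedComponents.surjective_coe (α := U)
  have hσ : Function.Injective fun c => (σ c : α) :=
    Subtype.val_injective.comp (Function.injective_surjInv _)
  refine ⟨S.map ⟨_, hσ⟩, card_map _, ?_, ?_⟩
  · intro x hx
    obtain ⟨c, -, rfl⟩ := mem_map.1 hx
    exact (σ c).2
  · simp only [mem_map, Function.Embedding.coeFn_mk]
    rintro _ ⟨c, -, rfl⟩ _ ⟨d, -, rfl⟩ hlt
    by_contra! hsub
    have hcd := ConnectedComponents.mk_eq_mk_of_Icc_subset hlt.le hsub
    rw [Function.surjInv_eq ConnectedComponents.surjective_coe,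
      Function.surjInv_eq ConnectedComponents.surjective_coe] at hcd
    exact hlt.ne (by rw [hcd])

end ConditionallyComplete

theorem stmt_14_general (U : Set ℝ) (hU : U ⊆ Set.Icc 0 1) :
    (ENat.card (ConnectedComponents U) : ℝ≥0∞)
      ≤ 1 + (1 / 2) * eVariationOn (U.indicator fun _ => (1 : ℝ)) (Set.Icc 0 1) := by
  refine ENat.toENNReal_card_le_of_forall_finset_card_le fun S => ?_
  obtain ⟨T, hcard, hTU, hgap⟩ := ConnectedComponents.exists_finset_separated_by_gaps S
  have hvar := two_mul_card_le_eVariationOn_indicator_add_two T hTU hgap fun t ht => hU (hTU ht)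
  have hhalf : (1 / 2 : ℝ≥0∞) * 2 = 1 := ENNReal.div_mul_cancel two_ne_zero ENNReal.ofNat_ne_top
  rw [← hcard]
  calc (#T : ℝ≥0∞) = 1 / 2 * (2 * #T) := by rw [← mul_assoc, hhalf, one_mul]
    _ ≤ 1 / 2 * (eVariationOn (U.indicator fun _ => (1 : ℝ)) (Icc 0 1) + 2) := by gcongr
    _ = _ := by rw [mul_add, hhalf, add_comm]

theorem stmt_14 (U : Set ℝ) (hU : U ⊆ Set.Icc 0 1)
    (hopen : ∃ V : Set ℝ, IsOpen V ∧ U = V ∩ Set.Icc 0 1) :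
    (ENat.card (ConnectedComponents U) : ℝ≥0∞)
      ≤ 1 + (1 / 2) * eVariationOn (U.indicator fun _ => (1 : ℝ)) (Set.Icc 0 1) :=
  stmt_14_general U hU
end
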